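/- arXiv:math/0702351 — 5 statements merged into one kernel-verified Lean document; each statement's English description precedes it below -/
import Mathlib

section
/- For every k ∈ ℕ and every permutation π of [k] there exists a constant c such that for every n ∈ ℕ, the number of ordered hypergraphs on [n] that avoid π is at most c^n. -/
/-- The element `i ∈ [k]` viewed as an element of `[2k]` (the left half). -/
def finL (k : ℕ) (i : Fin k) : Fin (2 * k) := ⟨i.1, by have := i.isLt; omega⟩

/-- The element `π(i) + k` viewed as an element of `[2k]` (the right half). -/
def finR (k : ℕ) (i : Fin k) : Fin (2 * k) := ⟨k + i.1, by have := i.isLt; omega⟩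

/-- The ordered hypergraph `H` on `[n]` contains the permutation `π` of `[k]`: there are
vertices `v_1 < … < v_{2k}` and pairwise distinct edges `E_1, …, E_k` of `H` with
`{v_i, v_{π(i)+k}} ⊆ E_i` for every `i ∈ [k]`. -/
def HContainsPerm {n k : ℕ} (H : Finset (Finset (Fin n))) (π : Equiv.Perm (Fin k)) : Prop :=
  ∃ v : Fin (2 * k) → Fin n, StrictMono v ∧ ∃ E : Fin k → Finset (Fin n),
    Function.Injective E ∧ ∀ i : Fin k, E i ∈ H ∧ v (finL k i) ∈ E i ∧ v (finR k (π i)) ∈ E i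

/-!
Incidences first. Contracting each block of `s` consecutive vertices to a point maps a
`π`-avoiding hypergraph to a `π`-avoiding one. Boundedly many edges can collapse onto the same
large image, and boundedly many can be fat (carry `k` vertices) inside one block: otherwise a
Kőnig-type dichotomy yields `k` of them through a common `k`-set together with `k` distinct
vertices on one side of it, which spell out `π`. This gives `I(n) ≤ A · I(n / s + 1) + O(n)` for
the number `I(n)` of incidences, with `A` independent of `s`; taking `s = A + 2` gives
`I(n) = O(n)`.

Counting then halves. Contracting pairs of vertices maps avoiders on `2m` vertices to avoiders
on `m`, and a preimage of `G` is determined by the pairs it contains as edges and by its fibers;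
the fiber over an edge `F` of `G` is one of at most `L ^ |F|` sets, so `G` has at most
`2 ^ m · L ^ I(m) ≤ K ^ m` preimages. Hence `a(2m) ≤ a(m) · K ^ m`, and `a(n) ≤ K ^ (2n)`.
-/

namespace PermAvoidance

open Finset

variable {k : ℕ}

section Pattern

lemma finL_lt_finR (i j : Fin k) : finL k i < finR k j := by
  simp only [Fin.lt_def, finL, finR]; omega

lemma strictMono_finL : StrictMono (finL k) := fun _ _ h => by
  simpa only [Fin.lt_def, finL] using h

lemma strictMono_finR : StrictMono (finR k) := fun _ _ h => by
  simp only [Fin.lt_def, finR] at h ⊢; omega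

lemma exists_eq_finL_or_finR (j : Fin (2 * k)) : (∃ i, j = finL k i) ∨ ∃ i, j = finR k i := by
  by_cases h : j.1 < k
  · exact .inl ⟨⟨j, h⟩, Fin.ext rfl⟩
  · exact .inr ⟨⟨j - k, by omega⟩, Fin.ext (by simp only [finR]; omega)⟩

variable {α β : Type*} [Preorder α] [Preorder β]

/-- `HContainsPerm` over an arbitrary ordered ground set. -/
def ContainsPerm (π : Equiv.Perm (Fin k)) (H : Finset (Finset α)) : Prop :=
  ∃ v : Fin (2 * k) → α, StrictMono v ∧ ∃ E : Fin k → Finset α, Function.Injective E ∧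
    ∀ i : Fin k, E i ∈ H ∧ v (finL k i) ∈ E i ∧ v (finR k (π i)) ∈ E i

variable {π : Equiv.Perm (Fin k)} {H : Finset (Finset α)}

lemma ContainsPerm.mono {H' : Finset (Finset α)} (h : ContainsPerm π H) (hH : H ⊆ H') :
    ContainsPerm π H' := by
  obtain ⟨v, hv, E, hE, hmem⟩ := h
  exact ⟨v, hv, E, hE, fun i => ⟨hH (hmem i).1, (hmem i).2⟩⟩

lemma containsPerm_of_strictMono (x y : Fin k → α) (hx : StrictMono x) (hy : StrictMono y)
    (hxy : ∀ i j, x i < y j) (E : Fin k → Finset α) (hE : Function.Injective E)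
    (hEH : ∀ i, E i ∈ H) (hxE : ∀ i, x i ∈ E i) (hyE : ∀ i, y (π i) ∈ E i) :
    ContainsPerm π H := by
  let v : Fin (2 * k) → α := fun j =>
    if h : j.1 < k then x ⟨j, h⟩ else y ⟨j - k, by omega⟩
  have hvL : ∀ i, v (finL k i) = x i := fun i => by simp [v, finL]
  have hvR : ∀ i, v (finR k i) = y i := fun i => by simp [v, finR]
  refine ⟨v, fun a b hab => ?_, E, hE, fun i =>
    ⟨hEH i, by rw [hvL]; exact hxE i, by rw [hvR]; exact hyE i⟩⟩
  rcases exists_eq_finL_or_finR a with ⟨i, rfl⟩ | ⟨i, rfl⟩ <;>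
    rcases exists_eq_finL_or_finR b with ⟨j, rfl⟩ | ⟨j, rfl⟩
  · rw [hvL, hvL]; exact hx (strictMono_finL.lt_iff_lt.1 hab)
  · rw [hvL, hvR]; exact hxy i j
  · exact absurd hab (finL_lt_finR j i).not_gt
  · rw [hvR, hvR]; exact hy (strictMono_finR.lt_iff_lt.1 hab)

lemma ContainsPerm.of_image_map [DecidableEq β] (f : α ↪o β)
    (h : ContainsPerm π (H.image (Finset.map f.toEmbedding))) : ContainsPerm π H := by
  obtain ⟨v, hv, E, hE, hmem⟩ := h
  choose e he heE using fun i => Finset.mem_image.1 (hmem i).1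
  have hrange : ∀ j, ∃ a, f a = v j := by
    intro j
    obtain ⟨i, hi⟩ : ∃ i, v j ∈ E i := by
      rcases exists_eq_finL_or_finR j with ⟨i, rfl⟩ | ⟨i, rfl⟩
      · exact ⟨i, (hmem i).2.1⟩
      · exact ⟨π.symm i, by simpa using (hmem (π.symm i)).2.2⟩
    rw [← heE i, Finset.mem_map] at hi
    obtain ⟨a, -, ha⟩ := hi
    exact ⟨a, ha⟩
  choose w hw using hrange
  have hwE : ∀ j i, v j ∈ E i → w j ∈ e i := fun j i hj => by
    rw [← heE i, ← hw j] at hj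
    simpa using hj
  refine ⟨w, fun a b hab => f.lt_iff_lt.1 (by rw [hw, hw]; exact hv hab), e,
    fun i j hij => hE (by rw [← heE i, ← heE j, hij]), fun i => ⟨he i, ?_, ?_⟩⟩
  · exact hwE _ _ (hmem i).2.1
  · exact hwE _ _ (hmem i).2.2

end Pattern

section Counting

variable {α β : Type*}

/-- A Kőnig-type dichotomy for partial transversals of the family `r`. -/
lemma exists_transversal_or_cover [DecidableEq β] [Nonempty α] (k : ℕ) (s : Finset α)
    (r : α → Finset β) :
    (∃ V : Finset β, #V = k ∧
      ∃ W : β → α, Set.InjOn W V ∧ ∀ c ∈ V, W c ∈ s ∧ c ∈ r (W c)) ∨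
      ∃ X : Finset β, #X < k ∧ #{a ∈ s | ¬r a ⊆ X} < k := by
  classical
  induction k with
  | zero => exact .inl ⟨∅, rfl, fun _ => Classical.arbitrary α, by simp, by simp⟩
  | succ k ih =>
    rcases ih with ⟨V, hV, W, hW, hVW⟩ | ⟨X, hX, hcover⟩
    · by_cases hext : ∃ a ∈ s, a ∉ V.image W ∧ ∃ x ∈ r a, x ∉ V
      · obtain ⟨a, has, haV, x, hxr, hxV⟩ := hext
        have hupd : ∀ c ∈ V, Function.update W x a c = W c := fun c hc =>
          Function.update_of_ne (by rintro rfl; exact hxV hc) _ _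
        refine .inl ⟨insert x V, by rw [card_insert_of_notMem hxV, hV],
          Function.update W x a, ?_, ?_⟩
        · rw [coe_insert, Set.injOn_insert (by simpa using hxV)]
          refine ⟨hW.congr fun c hc => (hupd c hc).symm, ?_⟩
          rintro ⟨c, hc, hca⟩
          rw [hupd c hc, Function.update_self] at hca
          exact haV (mem_image.2 ⟨c, hc, hca⟩)
        · intro c hc
          rcases mem_insert.1 hc with rfl | hc
          · simpa using ⟨has, hxr⟩
          · rw [hupd c hc]; exact hVW c hc
      · push Not at hext
        refine .inr ⟨V, by omega, (card_le_card (t := V.image W) fun a ha => ?_).trans_lt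
          (card_image_le.trans_lt (by omega))⟩
        rw [mem_filter, not_subset] at ha
        obtain ⟨x, hxr, hxV⟩ := ha.2
        by_contra haV
        exact hxV (hext a ha.1 haV x hxr)
    · exact .inr ⟨X, by omega, by omega⟩

lemma exists_subset_lt_card_filter_subset [DecidableEq β] {k N : ℕ} {B : Finset β}
    {D : Finset α} {f : α → Finset β} (hf : ∀ a ∈ D, k ≤ #(f a ∩ B))
    (hD : (#B).choose k * N < #D) :
    ∃ S ⊆ B, #S = k ∧ N < #{a ∈ D | S ⊆ f a} := by
  choose! S hS hSk using fun a (ha : a ∈ D) => exists_subset_card_eq (hf a ha)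
  have hmaps : ∀ a ∈ D, S a ∈ B.powersetCard k := fun a ha =>
    mem_powersetCard.2 ⟨(hS a ha).trans inter_subset_right, hSk a ha⟩
  obtain ⟨T, hT, hTN⟩ :=
    exists_lt_card_fiber_of_mul_lt_card_of_maps_to hmaps (by rwa [card_powersetCard])
  refine ⟨T, (mem_powersetCard.1 hT).1, (mem_powersetCard.1 hT).2,
    hTN.trans_le (card_le_card fun a ha => ?_)⟩
  rw [mem_filter] at ha ⊢
  exact ⟨ha.1, ha.2 ▸ (hS a ha.1).trans inter_subset_left⟩

lemma card_filter_card_le_le_pow [DecidableEq β] (X : Finset β) (t : ℕ) :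
    #{S ∈ X.powerset | #S ≤ t} ≤ (#X + 1) ^ t := by
  calc #{S ∈ X.powerset | #S ≤ t}
      ≤ #((range (t + 1)).biUnion fun j => X.powersetCard j) := card_le_card fun S hS => by
        rw [mem_filter, mem_powerset] at hS
        exact mem_biUnion.2 ⟨#S, mem_range.2 (by omega), mem_powersetCard.2 ⟨hS.1, rfl⟩⟩
    _ ≤ ∑ j ∈ range (t + 1), (#X).choose j := card_biUnion_le.trans_eq (by simp)
    _ ≤ ∑ j ∈ range (t + 1), #X ^ j * 1 ^ (t - j) * t.choose j :=
        sum_le_sum fun j hj => by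
          rw [one_pow, mul_one]
          exact (Nat.choose_le_pow _ _).trans
            (Nat.le_mul_of_pos_right _ (Nat.choose_pos (by simpa [Nat.lt_succ_iff] using hj)))
    _ = (#X + 1) ^ t := (add_pow _ _ _).symm

lemma sum_card_filter_le_card_mul {s : Finset α} {t : Finset β} (r : α → β → Prop)
    [∀ a b, Decidable (r a b)] {N : ℕ} (h : ∀ b ∈ t, #{a ∈ s | r a b} ≤ N) :
    ∑ a ∈ s, #{b ∈ t | r a b} ≤ #t * N :=
  (sum_card_bipartiteAbove_eq_sum_card_bipartiteBelow r).trans_le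
    (sum_le_card_nsmul t _ N h)

end Counting

variable {π : Equiv.Perm (Fin k)} {t m n M : ℕ} {H : Finset (Finset ℕ)} {E F S : Finset ℕ}

section Blocks

def block (t b : ℕ) : Finset ℕ := Ico (b * t) (b * t + t)

def blockImage (t : ℕ) (E : Finset ℕ) : Finset ℕ := E.image (· / t)

def contract (t : ℕ) (H : Finset (Finset ℕ)) : Finset (Finset ℕ) :=
  {E ∈ H | 2 ≤ #(blockImage t E)}.image (blockImage t)

def fiber (t : ℕ) (H : Finset (Finset ℕ)) (F : Finset ℕ) : Finset (Finset ℕ) :=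
  {E ∈ H | blockImage t E = F}

def fiberUnion (t : ℕ) (H : Finset (Finset ℕ)) (F : Finset ℕ) : Finset ℕ :=
  (fiber t H F).biUnion id


lemma card_block (t b : ℕ) : #(block t b) = t := by
  simp [block]

lemma mem_block (ht : 0 < t) {x b : ℕ} : x ∈ block t b ↔ x / t = b := by
  rw [block, mem_Ico]
  constructor
  · rintro ⟨h₁, h₂⟩
    exact Nat.div_eq_of_lt_le h₁ (by linarith [add_mul b 1 t])
  · rintro rfl
    exact ⟨Nat.div_mul_le_self x t, by linarith [Nat.lt_div_mul_add (a := x) ht]⟩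

@[simp]
lemma mem_blockImage {c : ℕ} : c ∈ blockImage t E ↔ ∃ x ∈ E, x / t = c := mem_image

@[simp]
lemma blockImage_one (E : Finset ℕ) : blockImage 1 E = E := by
  simp [blockImage]

lemma subset_biUnion_block (ht : 0 < t) (E : Finset ℕ) :
    E ⊆ (blockImage t E).biUnion (block t) := fun x hx =>
  mem_biUnion.2 ⟨x / t, mem_blockImage.2 ⟨x, hx, rfl⟩, (mem_block ht).2 rfl⟩

@[simp]
lemma mem_fiber : E ∈ fiber t H F ↔ E ∈ H ∧ blockImage t E = F := mem_filter

@[simp]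
lemma mem_fiberUnion {x : ℕ} : x ∈ fiberUnion t H F ↔ ∃ E ∈ fiber t H F, x ∈ E := by
  simp [fiberUnion]

lemma mem_contract : F ∈ contract t H ↔ 2 ≤ #F ∧ ∃ E ∈ H, blockImage t E = F := by
  simp only [contract, mem_image, mem_filter]
  constructor
  · rintro ⟨E, ⟨hE, h2⟩, rfl⟩; exact ⟨h2, E, hE, rfl⟩
  · rintro ⟨h2, E, hE, rfl⟩; exact ⟨E, ⟨hE, h2⟩, rfl⟩

lemma subset_fiberUnion (hE : E ∈ H) : E ⊆ fiberUnion t H (blockImage t E) := fun _ hx =>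
  mem_fiberUnion.2 ⟨E, mem_fiber.2 ⟨hE, rfl⟩, hx⟩

lemma card_fiber_le_two_pow : #(fiber t H F) ≤ 2 ^ #(fiberUnion t H F) :=
  (card_le_card fun E hE => mem_powerset.2 fun _ hx => mem_fiberUnion.2 ⟨E, hE, hx⟩).trans_eq
    (card_powerset _)

lemma card_fiberUnion_le_sum (ht : 0 < t) :
    #(fiberUnion t H F) ≤ ∑ b ∈ F, #(fiberUnion t H F ∩ block t b) := by
  refine (card_le_card fun x hx => ?_).trans card_biUnion_le
  obtain ⟨E, hE, hxE⟩ := mem_fiberUnion.1 hx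
  rw [mem_fiber] at hE
  exact mem_biUnion.2 ⟨x / t, hE.2 ▸ mem_blockImage.2 ⟨x, hxE, rfl⟩,
    mem_inter.2 ⟨hx, (mem_block ht).2 rfl⟩⟩

lemma containsPerm_of_blockImage (u : Fin (2 * k) → ℕ) (hu : StrictMono u)
    (E : Fin k → Finset ℕ) (hE : Function.Injective E) (hEH : ∀ i, E i ∈ H)
    (huE : ∀ i, u (finL k i) ∈ blockImage t (E i) ∧
      u (finR k (π i)) ∈ blockImage t (E i)) :
    ContainsPerm π H := by
  choose x hxE hx using fun i => mem_blockImage.1 (huE i).1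
  choose y hyE hy using fun i => mem_blockImage.1 (huE i).2
  have hy' : ∀ j, y (π.symm j) / t = u (finR k j) := fun j => by simpa using hy (π.symm j)
  refine containsPerm_of_strictMono x (y ∘ π.symm) (fun i j h => ?_) (fun i j h => ?_)
    (fun i j => ?_) E hE hEH hxE (by simpa using hyE)
  · exact Nat.lt_of_div_lt_div (c := t) (by rw [hx, hx]; exact hu (strictMono_finL h))
  · exact Nat.lt_of_div_lt_div (c := t) (by
      rw [Function.comp_apply, Function.comp_apply, hy', hy']; exact hu (strictMono_finR h))
  · exact Nat.lt_of_div_lt_div (c := t) (by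
      rw [Function.comp_apply, hx, hy']; exact hu (finL_lt_finR i j))

lemma ContainsPerm.of_image_blockImage (h : ContainsPerm π (H.image (blockImage t))) :
    ContainsPerm π H := by
  obtain ⟨v, hv, F, hF, hmem⟩ := h
  choose E hEH hEF using fun i => mem_image.1 (hmem i).1
  exact containsPerm_of_blockImage v hv E (fun i j hij => hF (by rw [← hEF, ← hEF, hij])) hEH
    fun i => by rw [hEF]; exact (hmem i).2

lemma not_containsPerm_contract (h : ¬ContainsPerm π H) : ¬ContainsPerm π (contract t H) :=
  fun hc => h (hc.mono (image_subset_image (filter_subset _ _))).of_image_blockImage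

lemma card_fiber_lt (h : ¬ContainsPerm π H) (hF : 2 * k ≤ #F) : #(fiber t H F) < k := by
  by_contra! hk
  obtain ⟨U, hUF, hU⟩ := exists_subset_card_eq hF
  obtain ⟨e⟩ : Nonempty (Fin k ↪ fiber t H F) :=
    Function.Embedding.nonempty_of_card_le (by simpa using hk)
  have he : ∀ i, (e i : Finset ℕ) ∈ H ∧ blockImage t (e i) = F := fun i =>
    mem_fiber.1 (e i).2
  refine h (containsPerm_of_blockImage (t := t) (U.orderEmbOfFin hU) (U.orderEmbOfFin hU).strictMono
    (fun i => e i) (fun i j hij => e.injective (Subtype.ext hij)) (fun i => (he i).1) fun i => ?_)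
  rw [(he i).2]
  exact ⟨hUF (orderEmbOfFin_mem U hU _), hUF (orderEmbOfFin_mem U hU _)⟩

end Blocks

section Stars

lemma containsPerm_of_transversal_below {lo : ℕ} (hS : #S = k) (hSlo : ∀ x ∈ S, lo ≤ x / t)
    {V : Finset ℕ} (hV : #V = k) {W : ℕ → Finset ℕ} (hW : Set.InjOn W V)
    (hVW : ∀ c ∈ V, S ⊆ fiberUnion t H (W c) ∧ c ∈ W c ∧ c < lo) :
    ContainsPerm π H := by
  set e := V.orderEmbOfFin hV
  set u := S.orderEmbOfFin hS
  have heV : ∀ i, e i ∈ V := orderEmbOfFin_mem V hV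
  choose E hE huE using fun i =>
    mem_fiberUnion.1 ((hVW _ (heV i)).1 (orderEmbOfFin_mem S hS (π i)))
  choose x hxE hx using fun i =>
    mem_blockImage.1 (by rw [(mem_fiber.1 (hE i)).2]; exact (hVW _ (heV i)).2.1)
  refine containsPerm_of_strictMono x u (fun i j h => Nat.lt_of_div_lt_div (c := t) ?_)
    u.strictMono (fun i j => Nat.lt_of_div_lt_div (c := t) ?_) E (fun i j hij => ?_)
    (fun i => (mem_fiber.1 (hE i)).1) hxE huE
  · rw [hx, hx]; exact e.strictMono h
  · rw [hx]; exact (hVW _ (heV i)).2.2.trans_le (hSlo _ (orderEmbOfFin_mem S hS j))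
  · refine e.injective (hW (heV i) (heV j) ?_)
    rw [← (mem_fiber.1 (hE i)).2, ← (mem_fiber.1 (hE j)).2, hij]

lemma containsPerm_of_transversal_above {hi : ℕ} (hS : #S = k) (hShi : ∀ x ∈ S, x / t ≤ hi)
    {V : Finset ℕ} (hV : #V = k) {W : ℕ → Finset ℕ} (hW : Set.InjOn W V)
    (hVW : ∀ c ∈ V, S ⊆ fiberUnion t H (W c) ∧ c ∈ W c ∧ hi < c) :
    ContainsPerm π H := by
  set e := V.orderEmbOfFin hV
  set u := S.orderEmbOfFin hS
  have heV : ∀ i, e i ∈ V := orderEmbOfFin_mem V hV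
  choose E hE huE using fun i =>
    mem_fiberUnion.1 ((hVW _ (heV (π i))).1 (orderEmbOfFin_mem S hS i))
  choose y hyE hy using fun i =>
    mem_blockImage.1 (by rw [(mem_fiber.1 (hE i)).2]; exact (hVW _ (heV (π i))).2.1)
  have hy' : ∀ j, y (π.symm j) / t = e j := fun j => by simpa using hy (π.symm j)
  refine containsPerm_of_strictMono u (y ∘ π.symm) u.strictMono
    (fun i j h => Nat.lt_of_div_lt_div (c := t) ?_) (fun i j => Nat.lt_of_div_lt_div (c := t) ?_)
    E (fun i j hij => ?_) (fun i => (mem_fiber.1 (hE i)).1) huE (by simpa using hyE)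
  · rw [Function.comp_apply, Function.comp_apply, hy', hy']; exact e.strictMono h
  · rw [Function.comp_apply, hy']
    exact (hShi _ (orderEmbOfFin_mem S hS i)).trans_lt (hVW _ (heV j)).2.2
  · refine π.injective (e.injective (hW (heV _) (heV _) ?_))
    rw [← (mem_fiber.1 (hE i)).2, ← (mem_fiber.1 (hE j)).2, hij]

/-- Members of `D` whose parts below `lo` and above `hi` are covered by `Xb` and `Xa` are subsets
of `Xb ∪ Xa ∪ [lo, hi]`. -/
lemma card_le_of_card_filter_not_subset_lt {D : Finset (Finset ℕ)} {lo hi : ℕ}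
    {Xb Xa : Finset ℕ} (hXb : #Xb < k) (hXa : #Xa < k)
    (hbelow : #{F ∈ D | ¬F.filter (· < lo) ⊆ Xb} < k)
    (habove : #{F ∈ D | ¬F.filter (hi < ·) ⊆ Xa} < k) :
    #D ≤ 2 * k + 2 ^ (2 * k + (hi + 1 - lo)) := by
  have hcover : D ⊆ {F ∈ D | ¬F.filter (· < lo) ⊆ Xb} ∪
      {F ∈ D | ¬F.filter (hi < ·) ⊆ Xa} ∪ (Xb ∪ Xa ∪ Icc lo hi).powerset := by
    intro F hF
    by_cases h₁ : F.filter (· < lo) ⊆ Xb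
    · by_cases h₂ : F.filter (hi < ·) ⊆ Xa
      · refine mem_union_right _ (mem_powerset.2 fun c hc => ?_)
        rcases lt_or_ge c lo with hlo | hlo
        · exact mem_union_left _ (mem_union_left _ (h₁ (mem_filter.2 ⟨hc, hlo⟩)))
        rcases lt_or_ge hi c with hhi | hhi
        · exact mem_union_left _ (mem_union_right _ (h₂ (mem_filter.2 ⟨hc, hhi⟩)))
        · exact mem_union_right _ (mem_Icc.2 ⟨hlo, hhi⟩)
      · exact mem_union_left _ (mem_union_right _ (mem_filter.2 ⟨hF, h₂⟩))
    · exact mem_union_left _ (mem_union_left _ (mem_filter.2 ⟨hF, h₁⟩))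
  have hX : #(Xb ∪ Xa ∪ Icc lo hi) ≤ 2 * k + (hi + 1 - lo) := by
    have := card_union_le (Xb ∪ Xa) (Icc lo hi)
    have := card_union_le Xb Xa
    rw [Nat.card_Icc] at *
    omega
  calc #D ≤ #{F ∈ D | ¬F.filter (· < lo) ⊆ Xb} + #{F ∈ D | ¬F.filter (hi < ·) ⊆ Xa} +
        2 ^ #(Xb ∪ Xa ∪ Icc lo hi) := by
        refine (card_le_card hcover).trans ((card_union_le _ _).trans ?_)
        rw [card_powerset]
        exact Nat.add_le_add_right (card_union_le _ _) _
    _ ≤ 2 * k + 2 ^ (2 * k + (hi + 1 - lo)) := by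
        have := Nat.pow_le_pow_right two_pos hX
        omega

/-- A transversal of `k` members of `D` lying below block `lo`, or above block `hi`, would
complete the pattern with `S`. -/
lemma card_le_of_subset_fiberUnion (h : ¬ContainsPerm π H) (hS : #S = k) {lo hi : ℕ}
    (hSlohi : ∀ x ∈ S, lo ≤ x / t ∧ x / t ≤ hi) {D : Finset (Finset ℕ)}
    (hD : ∀ F ∈ D, S ⊆ fiberUnion t H F) : #D ≤ 2 * k + 2 ^ (2 * k + (hi + 1 - lo)) := by
  obtain ⟨Xb, hXb, hbelow⟩ :=
    (exists_transversal_or_cover k D fun F => F.filter (· < lo)).resolve_left <| by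
      rintro ⟨V, hV, W, hW, hVW⟩
      refine h (containsPerm_of_transversal_below hS (fun x hx => (hSlohi x hx).1) hV hW
        fun c hc => ?_)
      have := hVW c hc
      rw [mem_filter] at this
      exact ⟨hD _ this.1, this.2⟩
  obtain ⟨Xa, hXa, habove⟩ :=
    (exists_transversal_or_cover k D fun F => F.filter (hi < ·)).resolve_left <| by
      rintro ⟨V, hV, W, hW, hVW⟩
      refine h (containsPerm_of_transversal_above hS (fun x hx => (hSlohi x hx).2) hV hW
        fun c hc => ?_)
      have := hVW c hc
      rw [mem_filter] at this
      exact ⟨hD _ this.1, this.2⟩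
  exact card_le_of_card_filter_not_subset_lt hXb hXa hbelow habove

lemma card_filter_le_card_inter_block (h : ¬ContainsPerm π H) {s : ℕ} (hs : 0 < s) (b : ℕ) :
    #{E ∈ H | k ≤ #(E ∩ block s b)} ≤ s.choose k * (2 * k + 2 ^ (2 * k + s)) := by
  by_contra! hlt
  obtain ⟨S, hSB, hS, hD⟩ := exists_subset_lt_card_filter_subset (f := id)
    (fun E hE => (mem_filter.1 hE).2) (by rwa [card_block])
  refine hD.not_ge ((card_le_of_subset_fiberUnion (t := 1) h hS (lo := b * s)
    (hi := b * s + s - 1) (fun x hx => ?_) fun E hE => ?_).trans_eq (by congr 3; omega))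
  · have := mem_Ico.1 (hSB hx)
    rw [Nat.div_one]
    omega
  · rw [mem_filter, mem_filter] at hE
    exact hE.2.trans (by simpa only [id, blockImage_one] using subset_fiberUnion (t := 1) hE.1.1)

lemma card_filter_le_card_fiberUnion_inter_block (h : ¬ContainsPerm π H) (ht : 0 < t) (b : ℕ)
    (D : Finset (Finset ℕ)) :
    #{F ∈ D | k ≤ #(fiberUnion t H F ∩ block t b)} ≤
      t.choose k * (2 * k + 2 ^ (2 * k + 1)) := by
  by_contra! hlt
  obtain ⟨S, hSB, hS, hD⟩ := exists_subset_lt_card_filter_subset (f := fiberUnion t H)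
    (fun F hF => (mem_filter.1 hF).2) (by rwa [card_block])
  refine hD.not_ge ((card_le_of_subset_fiberUnion h hS (lo := b) (hi := b)
    (fun x hx => ?_) fun F hF => (mem_filter.1 hF).2).trans_eq (by congr 3; omega))
  rw [(mem_block ht).1 (hSB hx)]
  exact ⟨le_rfl, le_rfl⟩

end Stars

section Incidences

open Classical in
noncomputable def avoiders (π : Equiv.Perm (Fin k)) (n : ℕ) : Finset (Finset (Finset ℕ)) :=
  {H ∈ (range n).powerset.powerset | (∀ E ∈ H, 2 ≤ #E) ∧ ¬ContainsPerm π H}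

lemma mem_avoiders :
    H ∈ avoiders π n ↔ (∀ E ∈ H, E ⊆ range n ∧ 2 ≤ #E) ∧ ¬ContainsPerm π H := by
  simp only [avoiders, mem_filter, mem_powerset]
  exact ⟨fun ⟨h₁, h₂, h₃⟩ =>
      ⟨fun E hE => ⟨mem_powerset.1 (h₁ hE), h₂ E hE⟩, h₃⟩,
    fun ⟨h₁, h₂⟩ =>
      ⟨fun E hE => mem_powerset.2 (h₁ E hE).1, fun E hE => (h₁ E hE).2, h₂⟩⟩

lemma blockImage_subset_range (ht : 0 < t) (hE : E ⊆ range n) (hn : n ≤ t * M) :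
    blockImage t E ⊆ range M := by
  intro c hc
  obtain ⟨x, hx, rfl⟩ := mem_blockImage.1 hc
  have := mem_range.1 (hE hx)
  exact mem_range.2 ((Nat.div_lt_iff_lt_mul ht).2 (by rw [mul_comm]; omega))

lemma contract_mem_avoiders (ht : 0 < t) (hH : H ∈ avoiders π n) (hn : n ≤ t * M) :
    contract t H ∈ avoiders π M := by
  rw [mem_avoiders] at hH ⊢
  refine ⟨fun F hF => ?_, not_containsPerm_contract hH.2⟩
  obtain ⟨h2, E, hE, rfl⟩ := mem_contract.1 hF
  exact ⟨blockImage_subset_range ht (hH.1 E hE).1 hn, h2⟩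

lemma sum_card_le_two_pow_mul (hH : ∀ E ∈ H, E ⊆ range n) : ∑ E ∈ H, #E ≤ 2 ^ n * n :=
  calc ∑ E ∈ H, #E ≤ #H * n :=
        sum_le_card_nsmul _ _ _ fun E hE => (card_le_card (hH E hE)).trans_eq (card_range n)
    _ ≤ 2 ^ n * n := by
        gcongr
        exact (card_le_card fun E hE => mem_powerset.2 (hH E hE)).trans_eq (by simp)

lemma exists_mem_subset_block (ht : 0 < t) (hE : E.Nonempty) (h : ¬2 ≤ #(blockImage t E)) :
    ∃ b ∈ blockImage t E, E ⊆ block t b := by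
  obtain ⟨b, hb⟩ := card_le_one_iff_subset_singleton.1 (Nat.lt_succ_iff.1 (not_le.1 h))
  obtain ⟨c, hc⟩ := hE.image (· / t)
  refine ⟨b, mem_singleton.1 (hb hc) ▸ hc, fun x hx => ?_⟩
  exact (mem_block ht).2 (mem_singleton.1 (hb (mem_blockImage.2 ⟨x, hx, rfl⟩)))

lemma sum_card_filter_not_two_le_le (ht : 0 < t)
    (hH : ∀ E ∈ H, E.Nonempty ∧ blockImage t E ⊆ range M) :
    ∑ E ∈ H with ¬2 ≤ #(blockImage t E), #E ≤ M * 2 ^ t * t := by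
  have hsub : {E ∈ H | ¬2 ≤ #(blockImage t E)} ⊆
      (range M).biUnion fun b => (block t b).powerset := by
    intro E hE
    rw [mem_filter] at hE
    obtain ⟨b, hb, hEb⟩ := exists_mem_subset_block ht (hH E hE.1).1 hE.2
    exact mem_biUnion.2 ⟨b, (hH E hE.1).2 hb, mem_powerset.2 hEb⟩
  calc ∑ E ∈ H with ¬2 ≤ #(blockImage t E), #E
        ≤ #{E ∈ H | ¬2 ≤ #(blockImage t E)} * t :=
        sum_le_card_nsmul _ _ _ fun E hE => by
          obtain ⟨b, -, hb⟩ := mem_biUnion.1 (hsub hE)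
          exact (card_le_card (mem_powerset.1 hb)).trans_eq (card_block t b)
    _ ≤ M * 2 ^ t * t := by
        gcongr
        refine (card_le_card hsub).trans (card_biUnion_le.trans ?_)
        simp [card_block]

/-- Each block meeting `E` carries fewer than `k` vertices of `E` unless it is `k`-fat. -/
lemma card_le_card_fat_add (ht : 0 < t) {B : Finset ℕ} (hB : blockImage t E ⊆ B) :
    #E ≤ t * #{b ∈ B | k ≤ #(E ∩ block t b)} + k * #(blockImage t E) := by
  have hfib : ∀ b, {x ∈ E | x / t = b} = E ∩ block t b := fun b => by
    ext x; simp [mem_block ht]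
  calc #E = ∑ b ∈ blockImage t E, #(E ∩ block t b) := by
        rw [card_eq_sum_card_fiberwise (f := (· / t)) fun x hx =>
          mem_blockImage.2 ⟨x, hx, rfl⟩]
        simp only [hfib]
    _ ≤ ∑ b ∈ blockImage t E, (t * (if k ≤ #(E ∩ block t b) then 1 else 0) + k) :=
        sum_le_sum fun b _ => by
          split_ifs with hb
          · have := (card_le_card (inter_subset_right (s₁ := E))).trans_eq (card_block t b)
            omega
          · omega
    _ = t * #{b ∈ blockImage t E | k ≤ #(E ∩ block t b)} + k * #(blockImage t E) := by
        rw [sum_add_distrib, ← mul_sum, ← card_filter, sum_const, smul_eq_mul, mul_comm k]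
    _ ≤ t * #{b ∈ B | k ≤ #(E ∩ block t b)} + k * #(blockImage t E) := by
        gcongr

lemma sum_card_fat_le (h : ¬ContainsPerm π H) (ht : 0 < t) :
    ∑ E ∈ H, #{b ∈ range M | k ≤ #(E ∩ block t b)} ≤
      M * (t.choose k * (2 * k + 2 ^ (2 * k + t))) :=
  (sum_card_filter_le_card_mul _ fun b _ => card_filter_le_card_inter_block h ht b).trans_eq
    (by rw [card_range])

lemma sum_card_blockImage_eq :
    ∑ E ∈ H with 2 ≤ #(blockImage t E), #(blockImage t E) =
      ∑ F ∈ contract t H, #(fiber t H F) * #F := by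
  rw [← sum_fiberwise_of_maps_to (t := contract t H) (g := blockImage t) fun E hE =>
    mem_image_of_mem _ hE]
  refine sum_congr rfl fun F hF => ?_
  have hfib : ({E ∈ H | 2 ≤ #(blockImage t E)}.filter fun E => blockImage t E = F) =
      fiber t H F := by
    ext E
    simp only [mem_filter, mem_fiber]
    constructor
    · exact fun h => ⟨h.1.1, h.2⟩
    · exact fun h => ⟨⟨h.1, h.2 ▸ (mem_contract.1 hF).1⟩, h.2⟩
  rw [hfib, sum_const_nat fun E hE => by rw [(mem_fiber.1 hE).2]]

lemma card_fiber_le_of_card_lt (ht : 0 < t) (hF : #F < 2 * k) :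
    #(fiber t H F) ≤
      2 ^ (2 * k * k) + 2 ^ (2 * k * t) * #{b ∈ F | k ≤ #(fiberUnion t H F ∩ block t b)} := by
  by_cases hwide : #{b ∈ F | k ≤ #(fiberUnion t H F ∩ block t b)} = 0
  · rw [card_eq_zero, filter_eq_empty_iff] at hwide
    have : #(fiberUnion t H F) ≤ 2 * k * k :=
      (card_fiberUnion_le_sum ht).trans ((sum_le_card_nsmul _ _ k fun b hb => by
        have := hwide hb; omega).trans (by rw [smul_eq_mul]; gcongr))
    have := card_fiber_le_two_pow.trans (Nat.pow_le_pow_right two_pos this)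
    omega
  · have : #(fiberUnion t H F) ≤ 2 * k * t :=
      (card_fiberUnion_le_sum ht).trans ((sum_le_card_nsmul _ _ t fun b _ =>
        (card_le_card inter_subset_right).trans_eq (card_block t b)).trans
          (by rw [smul_eq_mul]; gcongr))
    calc #(fiber t H F) ≤ 2 ^ (2 * k * t) :=
          card_fiber_le_two_pow.trans (Nat.pow_le_pow_right two_pos this)
      _ ≤ 2 ^ (2 * k * t) * #{b ∈ F | k ≤ #(fiberUnion t H F ∩ block t b)} :=
          Nat.le_mul_of_pos_right _ (Nat.pos_of_ne_zero hwide)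
      _ ≤ _ := Nat.le_add_left _ _

lemma card_fiber_mul_card_le (h : ¬ContainsPerm π H) (ht : 0 < t) (F : Finset ℕ) :
    #(fiber t H F) * #F ≤ k * #F +
      2 * k * (2 ^ (2 * k * k) +
        2 ^ (2 * k * t) * #{b ∈ F | k ≤ #(fiberUnion t H F ∩ block t b)}) := by
  rcases le_or_gt (2 * k) #F with hF | hF
  · have := Nat.mul_le_mul_right #F (card_fiber_lt (t := t) h hF).le
    omega
  · calc #(fiber t H F) * #F ≤ #(fiber t H F) * (2 * k) := by gcongr
      _ ≤ 2 * k * (2 ^ (2 * k * k) + 2 ^ (2 * k * t) *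
            #{b ∈ F | k ≤ #(fiberUnion t H F ∩ block t b)}) := by
          rw [mul_comm]; gcongr; exact card_fiber_le_of_card_lt ht hF
      _ ≤ _ := Nat.le_add_left _ _

lemma sum_card_wide_le (h : ¬ContainsPerm π H) (ht : 0 < t)
    (hG : ∀ F ∈ contract t H, F ⊆ range M) :
    ∑ F ∈ contract t H, #{b ∈ F | k ≤ #(fiberUnion t H F ∩ block t b)} ≤
      M * (t.choose k * (2 * k + 2 ^ (2 * k + 1))) := by
  calc ∑ F ∈ contract t H, #{b ∈ F | k ≤ #(fiberUnion t H F ∩ block t b)}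
      ≤ ∑ F ∈ contract t H, #{b ∈ range M | k ≤ #(fiberUnion t H F ∩ block t b)} :=
        sum_le_sum fun F hF => card_le_card (filter_subset_filter _ (hG F hF))
    _ ≤ M * (t.choose k * (2 * k + 2 ^ (2 * k + 1))) :=
        (sum_card_filter_le_card_mul _ fun b _ =>
          card_filter_le_card_fiberUnion_inter_block h ht b _).trans_eq (by rw [card_range])

lemma sum_card_filter_two_le_le (h : ¬ContainsPerm π H) (ht : 0 < t)
    (hH : ∀ E ∈ H, blockImage t E ⊆ range M) :
    ∑ E ∈ H with 2 ≤ #(blockImage t E), #E ≤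
      t * (M * (t.choose k * (2 * k + 2 ^ (2 * k + t)))) +
        k * ∑ F ∈ contract t H, #(fiber t H F) * #F := by
  rw [← sum_card_blockImage_eq, mul_sum]
  calc _ ≤ ∑ E ∈ H with 2 ≤ #(blockImage t E),
        (t * #{b ∈ range M | k ≤ #(E ∩ block t b)} + k * #(blockImage t E)) :=
        sum_le_sum fun E hE => card_le_card_fat_add ht (hH E (mem_filter.1 hE).1)
    _ ≤ t * ∑ E ∈ H, #{b ∈ range M | k ≤ #(E ∩ block t b)} +
          ∑ E ∈ H with 2 ≤ #(blockImage t E), k * #(blockImage t E) := by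
        rw [sum_add_distrib, ← mul_sum]
        exact Nat.add_le_add_right
          (Nat.mul_le_mul_left _ (sum_le_sum_of_subset (filter_subset _ _))) _
    _ ≤ _ := by
        gcongr
        exact sum_card_fat_le h ht

lemma sum_card_fiber_mul_card_le (h : ¬ContainsPerm π H) (ht : 0 < t)
    (hG : ∀ F ∈ contract t H, F ⊆ range M) :
    ∑ F ∈ contract t H, #(fiber t H F) * #F ≤ k * ∑ F ∈ contract t H, #F +
      2 * k * (2 ^ (2 * k * k) * #(contract t H) +
        2 ^ (2 * k * t) * (M * (t.choose k * (2 * k + 2 ^ (2 * k + 1))))) := by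
  calc _ ≤ ∑ F ∈ contract t H, (k * #F + 2 * k * (2 ^ (2 * k * k) + 2 ^ (2 * k * t) *
        #{b ∈ F | k ≤ #(fiberUnion t H F ∩ block t b)})) :=
        sum_le_sum fun F _ => card_fiber_mul_card_le h ht F
    _ = k * ∑ F ∈ contract t H, #F + 2 * k * (2 ^ (2 * k * k) * #(contract t H) +
          2 ^ (2 * k * t) *
            ∑ F ∈ contract t H, #{b ∈ F | k ≤ #(fiberUnion t H F ∩ block t b)}) := by
        rw [sum_add_distrib, ← mul_sum, ← mul_sum, sum_add_distrib, ← mul_sum, sum_const,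
          smul_eq_mul, mul_comm (2 ^ (2 * k * k))]
    _ ≤ _ := by
        gcongr
        exact sum_card_wide_le h ht hG

def incidenceSlope (k : ℕ) : ℕ := k * k * (1 + 2 * 2 ^ (2 * k * k))

def incidenceIntercept (k t : ℕ) : ℕ :=
  t * 2 ^ t + t * (t.choose k * (2 * k + 2 ^ (2 * k + t))) +
    2 * k * k * 2 ^ (2 * k * t) * (t.choose k * (2 * k + 2 ^ (2 * k + 1)))

/-- The slope does not depend on the block length `t`: this is what makes the recursion close. -/
lemma sum_card_le_slope_mul_add (h : ¬ContainsPerm π H) (ht : 0 < t)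
    (hH : ∀ E ∈ H, E.Nonempty ∧ blockImage t E ⊆ range M) :
    ∑ E ∈ H, #E ≤
      incidenceSlope k * ∑ F ∈ contract t H, #F + incidenceIntercept k t * M := by
  have hG : ∀ F ∈ contract t H, F ⊆ range M := fun F hF => by
    obtain ⟨-, E, hE, rfl⟩ := mem_contract.1 hF
    exact (hH E hE).2
  have hGcard : #(contract t H) ≤ ∑ F ∈ contract t H, #F :=
    (card_eq_sum_ones _).trans_le <| sum_le_sum fun F hF => by
      have := (mem_contract.1 hF).1; omega
  have hspread := (sum_card_filter_two_le_le h ht fun E hE => (hH E hE).2).trans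
    (Nat.add_le_add_left (Nat.mul_le_mul_left k (sum_card_fiber_mul_card_le h ht hG)) _)
  rw [← sum_filter_add_sum_filter_not H (fun E => 2 ≤ #(blockImage t E))]
  refine (add_le_add hspread (sum_card_filter_not_two_le_le ht hH)).trans ?_
  unfold incidenceSlope incidenceIntercept
  nlinarith [Nat.mul_le_mul_left (2 * k * k * 2 ^ (2 * k * k)) hGcard]

def incidenceBlock (k : ℕ) : ℕ := incidenceSlope k + 2

def incidenceConst (k : ℕ) : ℕ :=
  2 ^ (incidenceBlock k * incidenceBlock k) + incidenceIntercept k (incidenceBlock k)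

theorem sum_card_le_of_mem_avoiders (hH : H ∈ avoiders π n) :
    ∑ E ∈ H, #E ≤ incidenceConst k * n := by
  induction n using Nat.strong_induction_on generalizing H with
  | _ n ih =>
  set s := incidenceBlock k with hs_def
  have hs : 2 ≤ s := Nat.le_add_left 2 _
  by_cases hn : n ≤ s * s
  · calc ∑ E ∈ H, #E ≤ 2 ^ n * n :=
          sum_card_le_two_pow_mul fun E hE => ((mem_avoiders.1 hH).1 E hE).1
      _ ≤ incidenceConst k * n := by
          gcongr
          exact (Nat.pow_le_pow_right two_pos hn).trans (Nat.le_add_right _ _)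
  set M := n / s + 1
  have hnM : n ≤ s * M := (Nat.lt_mul_div_succ n (by omega)).le
  have hsM : s ≤ M := by
    have : s ≤ n / s := (Nat.le_div_iff_mul_le (by omega)).2 (by omega)
    omega
  have hMn : M < n := by
    have := Nat.div_le_div_left (a := n) hs two_pos
    have := Nat.mul_le_mul hs hs
    omega
  have hsMn : s * M ≤ n + s := by
    have := Nat.mul_div_le n s
    simp only [M, mul_add, mul_one]
    omega
  have hstep := sum_card_le_slope_mul_add (mem_avoiders.1 hH).2 (by omega) fun E hE =>
    ⟨card_pos.1 (by have := ((mem_avoiders.1 hH).1 E hE).2; omega),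
      blockImage_subset_range (by omega) ((mem_avoiders.1 hH).1 E hE).1 hnM⟩
  have hslope : incidenceSlope k * M + M ≤ n := by
    rw [hs_def, incidenceBlock] at hsM hsMn
    nlinarith
  calc ∑ E ∈ H, #E ≤ incidenceSlope k * (incidenceConst k * M) + incidenceConst k * M := by
        refine hstep.trans (add_le_add (Nat.mul_le_mul_left _ ?_) (Nat.mul_le_mul_right _ ?_))
        · exact ih M hMn (contract_mem_avoiders (by omega) hH hnM)
        · exact Nat.le_add_left _ _
    _ = incidenceConst k * (incidenceSlope k * M + M) := by ring
    _ ≤ incidenceConst k * n := Nat.mul_le_mul_left _ hslope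

end Incidences

section Doubling

/-- The candidates for the fiber over `F` when an avoiding hypergraph is contracted by pairs. -/
def possibleFibers (k : ℕ) (F : Finset ℕ) : Finset (Finset (Finset ℕ)) :=
  {S ∈ (F.biUnion (block 2)).powerset.powerset | 2 * k ≤ #F → #S ≤ k}

def doublingBase (k : ℕ) : ℕ := 2 ^ 2 ^ (4 * k) * 2 ^ (3 * k)

def doublingConst (k : ℕ) : ℕ := 2 * doublingBase k ^ incidenceConst k

lemma fiber_mem_possibleFibers (h : ¬ContainsPerm π H) : fiber 2 H F ∈ possibleFibers k F := by
  refine mem_filter.2 ⟨mem_powerset.2 fun E hE => mem_powerset.2 ?_, fun hF =>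
    (card_fiber_lt h hF).le⟩
  rw [← (mem_fiber.1 hE).2]
  exact subset_biUnion_block two_pos E

lemma card_possibleFibers_le (hF : F.Nonempty) :
    #(possibleFibers k F) ≤ doublingBase k ^ #F := by
  have hP : #(F.biUnion (block 2)) ≤ 2 * #F :=
    card_biUnion_le.trans (by simp [card_block, mul_comm])
  have hF1 : 1 ≤ #F := card_pos.2 hF
  by_cases hbig : 2 * k ≤ #F
  · calc #(possibleFibers k F)
        ≤ #{S ∈ (F.biUnion (block 2)).powerset.powerset | #S ≤ k} :=
          card_le_card fun S hS => by
            rw [possibleFibers, mem_filter] at hS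
            exact mem_filter.2 ⟨hS.1, hS.2 hbig⟩
      _ ≤ (#(F.biUnion (block 2)).powerset + 1) ^ k := card_filter_card_le_le_pow _ k
      _ ≤ (2 ^ (3 * #F)) ^ k := by
          gcongr
          rw [card_powerset]
          calc 2 ^ #(F.biUnion (block 2)) + 1 ≤ 2 ^ (2 * #F) + 2 ^ (2 * #F) :=
                add_le_add (Nat.pow_le_pow_right two_pos hP) Nat.one_le_two_pow
            _ = 2 ^ (2 * #F + 1) := by ring
            _ ≤ 2 ^ (3 * #F) := Nat.pow_le_pow_right two_pos (by omega)
      _ = (2 ^ (3 * k)) ^ #F := by rw [← pow_mul, ← pow_mul]; ring_nf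
      _ ≤ doublingBase k ^ #F := by
          gcongr
          exact Nat.le_mul_of_pos_left _ (by positivity)
  · calc #(possibleFibers k F) ≤ 2 ^ 2 ^ (2 * #F) := by
          refine (card_le_card (filter_subset _ _)).trans ?_
          rw [card_powerset, card_powerset]
          exact Nat.pow_le_pow_right two_pos (Nat.pow_le_pow_right two_pos hP)
      _ ≤ doublingBase k := by
          refine le_trans ?_ (Nat.le_mul_of_pos_right _ (by positivity))
          exact Nat.pow_le_pow_right two_pos (Nat.pow_le_pow_right two_pos (by omega))
      _ ≤ doublingBase k ^ #F := Nat.le_self_pow (by omega) _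

lemma filter_not_two_le_subset_image_block (hH : H ∈ avoiders π (2 * m)) :
    {E ∈ H | ¬2 ≤ #(blockImage 2 E)} ⊆ (range m).image (block 2) := by
  intro E hE
  rw [mem_filter] at hE
  obtain ⟨hErange, hE2⟩ := (mem_avoiders.1 hH).1 E hE.1
  obtain ⟨b, hb, hEb⟩ := exists_mem_subset_block two_pos (card_pos.1 (by omega)) hE.2
  refine mem_image.2 ⟨b, blockImage_subset_range two_pos hErange le_rfl hb, ?_⟩
  exact (eq_of_subset_of_card_le hEb (by rw [card_block]; exact hE2)).symm

lemma eq_of_contract_eq {H' : Finset (Finset ℕ)} (hc : contract t H = contract t H')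
    (hsmall : {E ∈ H | ¬2 ≤ #(blockImage t E)} = {E ∈ H' | ¬2 ≤ #(blockImage t E)})
    (hfiber : ∀ F ∈ contract t H, fiber t H F = fiber t H' F) : H = H' := by
  have key : ∀ {H H' : Finset (Finset ℕ)}, contract t H = contract t H' →
      {E ∈ H | ¬2 ≤ #(blockImage t E)} = {E ∈ H' | ¬2 ≤ #(blockImage t E)} →
      (∀ F ∈ contract t H, fiber t H F = fiber t H' F) → H ⊆ H' := by
    intro H H' _ hsmall hfiber E hE
    by_cases hE2 : 2 ≤ #(blockImage t E)
    · have := hfiber _ (mem_contract.2 ⟨hE2, E, hE, rfl⟩) ▸ mem_fiber.2 ⟨hE, rfl⟩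
      exact (mem_fiber.1 this).1
    · exact (mem_filter.1 (hsmall ▸ mem_filter.2 ⟨hE, hE2⟩)).1
  exact (key hc hsmall hfiber).antisymm
    (key hc.symm hsmall.symm fun F hF => (hfiber F (hc ▸ hF)).symm)

lemma card_filter_contract_eq_le {G : Finset (Finset ℕ)} (hG : G ∈ avoiders π m) :
    #{H ∈ avoiders π (2 * m) | contract 2 H = G} ≤
      2 ^ m * doublingBase k ^ (incidenceConst k * m) := by
  let encode : Finset (Finset ℕ) →
      Finset (Finset ℕ) × ((F : Finset ℕ) → F ∈ G → Finset (Finset ℕ)) :=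
    fun H => ({E ∈ H | ¬2 ≤ #(blockImage 2 E)}, fun F _ => fiber 2 H F)
  set S : Finset (Finset (Finset ℕ)) := {H ∈ avoiders π (2 * m) | contract 2 H = G}
  set T := ((range m).image (block 2)).powerset ×ˢ G.pi (possibleFibers k)
  have hmaps : Set.MapsTo encode S T := by
    intro H hH
    rw [mem_coe, mem_filter] at hH
    exact mem_product.2 ⟨mem_powerset.2 (filter_not_two_le_subset_image_block hH.1),
      mem_pi.2 fun F _ => fiber_mem_possibleFibers (F := F) (mem_avoiders.1 hH.1).2⟩
  have hinj : Set.InjOn encode S := by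
    intro H hH H' hH' heq
    rw [mem_coe, mem_filter] at hH hH'
    rw [Prod.ext_iff] at heq
    refine eq_of_contract_eq (hH.2.trans hH'.2.symm) heq.1 fun F hF => ?_
    exact congrFun (congrFun heq.2 F) (hH.2 ▸ hF)
  have hG' := mem_avoiders.1 hG
  calc #S ≤ #T := card_le_card_of_injOn encode hmaps hinj
    _ ≤ 2 ^ m * ∏ F ∈ G, doublingBase k ^ #F := by
        rw [card_product, card_powerset, card_pi]
        refine Nat.mul_le_mul (Nat.pow_le_pow_right two_pos (card_image_le.trans_eq (card_range m)))
          (prod_le_prod' fun F hF => card_possibleFibers_le (card_pos.1 ?_))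
        have := (hG'.1 F hF).2
        omega
    _ ≤ 2 ^ m * doublingBase k ^ (incidenceConst k * m) := by
        rw [prod_pow_eq_pow_sum]
        gcongr
        · exact Nat.one_le_iff_ne_zero.2 (by simp [doublingBase])
        · exact sum_card_le_of_mem_avoiders hG

lemma card_avoiders_two_mul_le (m : ℕ) :
    #(avoiders π (2 * m)) ≤ #(avoiders π m) * doublingConst k ^ m := by
  rw [card_eq_sum_card_fiberwise (f := contract 2) fun H hH =>
    contract_mem_avoiders two_pos hH le_rfl]
  refine (sum_le_card_nsmul _ _ _ fun G hG => card_filter_contract_eq_le hG).trans_eq ?_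
  rw [smul_eq_mul, doublingConst, mul_pow, ← pow_mul, mul_comm (incidenceConst k)]

lemma avoiders_mono (h : m ≤ n) : avoiders π m ⊆ avoiders π n := fun H hH => by
  rw [mem_avoiders] at hH ⊢
  exact ⟨fun E hE => ⟨(hH.1 E hE).1.trans (range_subset_range.2 h), (hH.1 E hE).2⟩, hH.2⟩

lemma card_avoiders_le_one (hn : n ≤ 1) : #(avoiders π n) ≤ 1 := by
  refine card_le_one.2 fun H hH H' hH' => ?_
  have hempty : ∀ {H}, H ∈ avoiders π n → H = ∅ := fun {H} hH => eq_empty_of_forall_notMem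
    fun E hE => by
      have := (mem_avoiders.1 hH).1 E hE
      have := (card_le_card this.1).trans_eq (card_range n)
      omega
  rw [hempty hH, hempty hH']

theorem card_avoiders_le (n : ℕ) : #(avoiders π n) ≤ (doublingConst k ^ 2) ^ n := by
  induction n using Nat.strong_induction_on with
  | _ n ih =>
  have hK : 0 < doublingConst k := by unfold doublingConst doublingBase; positivity
  rcases le_or_gt n 1 with hn | hn
  · exact (card_avoiders_le_one hn).trans (Nat.one_le_pow _ _ (by positivity))
  set m := (n + 1) / 2
  calc #(avoiders π n) ≤ #(avoiders π (2 * m)) := card_le_card (avoiders_mono (by omega))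
    _ ≤ (doublingConst k ^ 2) ^ m * doublingConst k ^ m :=
        (card_avoiders_two_mul_le m).trans (Nat.mul_le_mul_right _ (ih m (by omega)))
    _ = doublingConst k ^ (3 * m) := by ring
    _ ≤ (doublingConst k ^ 2) ^ n := by
        rw [← pow_mul]
        exact Nat.pow_le_pow_right hK (by omega)

end Doubling

lemma image_map_val_mem_avoiders {H : Finset (Finset (Fin n))} (hH : ∀ e ∈ H, 2 ≤ #e)
    (h : ¬HContainsPerm H π) :
    H.image (map (Fin.valOrderEmb n).toEmbedding) ∈ avoiders π n := by
  refine mem_avoiders.2 ⟨fun E hE => ?_, fun hc => h (hc.of_image_map (Fin.valOrderEmb n))⟩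
  obtain ⟨e, he, rfl⟩ := mem_image.1 hE
  exact ⟨fun x hx => by obtain ⟨a, -, rfl⟩ := mem_map.1 hx; exact mem_range.2 a.isLt,
    (card_map _).symm ▸ hH e he⟩

end PermAvoidance

theorem stmt14 (k : ℕ) (π : Equiv.Perm (Fin k)) :
    ∃ c : ℕ, ∀ n : ℕ,
      ({H : Finset (Finset (Fin n)) |
          (∀ e ∈ H, 2 ≤ e.card) ∧ ¬HContainsPerm H π}).ncard ≤ c ^ n := by
  refine ⟨PermAvoidance.doublingConst k ^ 2, fun n => ?_⟩
  calc _ ≤ (PermAvoidance.avoiders π n : Set (Finset (Finset ℕ))).ncard :=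
        Set.ncard_le_ncard_of_injOn _
          (fun H hH => PermAvoidance.image_map_val_mem_avoiders hH.1 hH.2)
          (Finset.image_injective (Finset.map_injective _)).injOn (Finset.finite_toSet _)
    _ = (PermAvoidance.avoiders π n).card := Set.ncard_coe_finset _
    _ ≤ (PermAvoidance.doublingConst k ^ 2) ^ n := PermAvoidance.card_avoiders_le n
end

section
/- There exists a constant C such that for every n ∈ ℕ, every n×n (0,1)-matrix that contains neither the 2×4 matrix S₁ = [[1,0,1,0],[0,1,0,1]] nor the 2×4 matrix S₂ = [[0,1,0,1],[1,0,1,0]] has at most C·n entries equal to 1. -/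
/-- The number of entries of the `(0,1)`-matrix `A` that equal 1. -/
def onesCount {m n : ℕ} (A : Fin m → Fin n → Bool) : ℕ :=
  (Finset.univ.filter fun p : Fin m × Fin n => A p.1 p.2 = true).card

/-- The `(0,1)`-matrix `A` contains the `(0,1)`-matrix `Q`: some submatrix of `A` of the
same dimensions as `Q` has a 1 in every position in which `Q` has a 1. -/
def MContains {m n p q : ℕ} (A : Fin m → Fin n → Bool) (Q : Fin p → Fin q → Bool) : Prop :=
  ∃ ρ : Fin p → Fin m, ∃ γ : Fin q → Fin n, StrictMono ρ ∧ StrictMono γ ∧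
    ∀ i j, Q i j = true → A (ρ i) (γ j) = true

/-- The matrix `S₁` with rows `(1,0,1,0)` and `(0,1,0,1)`. -/
def S1 : Fin 2 → Fin 4 → Bool :=
  ![![true, false, true, false], ![false, true, false, true]]

/-- The matrix `S₂` with rows `(0,1,0,1)` and `(1,0,1,0)`. -/
def S2 : Fin 2 → Fin 4 → Bool :=
  ![![false, true, false, true], ![true, false, true, false]]

noncomputable section aux
open scoped Classical

variable {n : ℕ} (A : Fin n → Fin n → Bool)

lemma strictMono_two {r r' : Fin n} (h : r < r') : StrictMono ![r, r'] := by
  intro i j hij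
  fin_cases i <;> fin_cases j <;> simp_all

lemma strictMono_four {c1 c2 c3 c4 : Fin n} (h12 : c1 < c2) (h23 : c2 < c3) (h34 : c3 < c4) :
    StrictMono ![c1, c2, c3, c4] := by
  have h13 : c1 < c3 := h12.trans h23
  have h24 : c2 < c4 := h23.trans h34
  have h14 : c1 < c4 := h13.trans h34
  intro i j hij
  fin_cases i <;> fin_cases j <;> simp_all

/-- From an alternating pattern `r r' r r'` on strictly increasing columns we get S1 or S2. -/
lemma pat {r r' c1 c2 c3 c4 : Fin n} (hne : r ≠ r')
    (h12 : c1 < c2) (h23 : c2 < c3) (h34 : c3 < c4)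
    (h1 : A r c1 = true) (h2 : A r' c2 = true) (h3 : A r c3 = true) (h4 : A r' c4 = true) :
    MContains A S1 ∨ MContains A S2 := by
  rcases hne.lt_or_gt with h | h
  · left
    exact ⟨![r, r'], ![c1, c2, c3, c4], strictMono_two h, strictMono_four h12 h23 h34,
      by intro i j hij; fin_cases i <;> fin_cases j <;> simp_all [S1]⟩
  · right
    exact ⟨![r', r], ![c1, c2, c3, c4], strictMono_two h, strictMono_four h12 h23 h34,
      by intro i j hij; fin_cases i <;> fin_cases j <;> simp_all [S2]⟩

/-- `c` is a deep point of row `r`. -/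
def Deep (r c : Fin n) : Prop :=
  A r c = true ∧ (∃ s1 s2, s1 < s2 ∧ s2 < c ∧ A r s1 = true ∧ A r s2 = true) ∧
    (∃ s3, c < s3 ∧ A r s3 = true)

/-- A column cannot be deep in two distinct rows. -/
lemma core {r r' c : Fin n} (hne : r ≠ r') (hd : Deep A r c) (hd' : Deep A r' c) :
    MContains A S1 ∨ MContains A S2 := by
  obtain ⟨hc, ⟨s1, s2, hs12, hs2c, hA1, hA2⟩, s3, hcs3, hA3⟩ := hd
  obtain ⟨hc', ⟨t1, t2, ht12, ht2c, hB1, hB2⟩, t3, hct3, hB3⟩ := hd'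
  rcases lt_trichotomy s2 t2 with h | h | h
  · exact pat A hne h ht2c hct3 hA2 hB2 hc hB3
  · exact pat A hne (h ▸ hs12) hs2c hct3 hA1 (h ▸ hB2) hc hB3
  · exact pat A hne.symm h hs2c hcs3 hB2 hA2 hc' hA3

def deepSet (r : Fin n) : Finset (Fin n) := Finset.univ.filter fun c => Deep A r c

def rowSet (r : Fin n) : Finset (Fin n) := Finset.univ.filter fun c => A r c = true

open Finset in
lemma card_row_le (r : Fin n) : (rowSet A r).card ≤ (deepSet A r).card + 3 := by
  classical
  have hsplit := Finset.card_filter_add_card_filter_not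
    (s := rowSet A r) (p := fun c => Deep A r c)
  have h1 : ((rowSet A r).filter fun c => Deep A r c) ⊆ deepSet A r := by
    intro c hc
    simp only [deepSet, mem_filter, mem_univ, true_and]
    exact (mem_filter.mp hc).2
  -- bound the non-deep part by 3
  set N := (rowSet A r).filter (fun c => ¬ Deep A r c) with hN
  have hNcard : N.card ≤ 3 := by
    have hsub : N ⊆ ((rowSet A r).filter fun c =>
        ¬ (∃ s1 s2, s1 < s2 ∧ s2 < c ∧ A r s1 = true ∧ A r s2 = true)) ∪
        ((rowSet A r).filter fun c => ¬ (∃ s3, c < s3 ∧ A r s3 = true)) := by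
      intro c hc
      rw [hN, mem_filter] at hc
      obtain ⟨hcr, hnd⟩ := hc
      rw [mem_union, mem_filter, mem_filter]
      by_contra hcon
      push_neg at hcon
      obtain ⟨hl, hr'⟩ := hcon
      exact hnd ⟨(mem_filter.mp hcr).2, hl hcr, hr' hcr⟩
    have hB1 : ((rowSet A r).filter fun c =>
        ¬ (∃ s1 s2, s1 < s2 ∧ s2 < c ∧ A r s1 = true ∧ A r s2 = true)).card ≤ 2 := by
      by_contra hgt
      rw [not_le, Finset.two_lt_card] at hgt
      obtain ⟨a, ha, b, hb, c, hc, hab, hac, hbc⟩ := hgt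
      -- get an ordered triple x < y < z
      have key : ∀ x y z : Fin n,
          x ∈ ((rowSet A r).filter fun c =>
            ¬ (∃ s1 s2, s1 < s2 ∧ s2 < c ∧ A r s1 = true ∧ A r s2 = true)) →
          y ∈ ((rowSet A r).filter fun c =>
            ¬ (∃ s1 s2, s1 < s2 ∧ s2 < c ∧ A r s1 = true ∧ A r s2 = true)) →
          z ∈ ((rowSet A r).filter fun c =>
            ¬ (∃ s1 s2, s1 < s2 ∧ s2 < c ∧ A r s1 = true ∧ A r s2 = true)) →
          x < y → y < z → False := by
        intro x y z hx hy hz hxy hyz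
        rw [mem_filter] at hx hy hz
        exact hz.2 ⟨x, y, hxy, hyz, (mem_filter.mp hx.1).2, (mem_filter.mp hy.1).2⟩
      rcases hab.lt_or_gt with h1 | h1 <;> rcases hac.lt_or_gt with h2 | h2 <;>
        rcases hbc.lt_or_gt with h3 | h3
      · exact key a b c ha hb hc h1 h3
      · exact key a c b ha hc hb h2 h3
      · exact key a b c ha hb hc h1 h3
      · exact key c a b hc ha hb h2 h1
      · exact key b a c hb ha hc h1 h2
      · exact key c b a hc hb ha h3 h1
      · exact key b c a hb hc ha h3 h2
      · exact key c b a hc hb ha h3 h1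
    have hB2 : ((rowSet A r).filter fun c => ¬ (∃ s3, c < s3 ∧ A r s3 = true)).card ≤ 1 := by
      rw [Finset.card_le_one]
      intro a ha b hb
      rw [mem_filter] at ha hb
      by_contra hne
      rcases (Ne.lt_or_gt hne) with h | h
      · exact ha.2 ⟨b, h, (mem_filter.mp hb.1).2⟩
      · exact hb.2 ⟨a, h, (mem_filter.mp ha.1).2⟩
    calc N.card ≤ _ := Finset.card_le_card hsub
      _ ≤ _ := Finset.card_union_le _ _
      _ ≤ 2 + 1 := Nat.add_le_add hB1 hB2
  have := Finset.card_le_card h1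
  omega

end aux

theorem stmt15 :
    ∃ C : ℕ, ∀ n : ℕ, ∀ A : Fin n → Fin n → Bool,
      ¬MContains A S1 → ¬MContains A S2 → onesCount A ≤ C * n := by
  classical
  refine ⟨4, fun n A h1 h2 => ?_⟩
  -- onesCount as sum of row cards
  have hsum : onesCount A = ∑ r : Fin n, (rowSet A r).card := by
    rw [onesCount, Finset.card_filter, Fintype.sum_prod_type]
    refine Finset.sum_congr rfl fun r _ => ?_
    rw [rowSet, Finset.card_filter]
  -- deep sets are pairwise disjoint
  have hdisj : ∀ r ∈ (Finset.univ : Finset (Fin n)), ∀ r' ∈ (Finset.univ : Finset (Fin n)),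
      r ≠ r' → Disjoint (deepSet A r) (deepSet A r') := by
    intro r _ r' _ hne
    rw [Finset.disjoint_left]
    intro c hc hc'
    rw [deepSet, Finset.mem_filter] at hc hc'
    rcases core A hne hc.2 hc'.2 with h | h
    · exact h1 h
    · exact h2 h
  have hdeepsum : ∑ r : Fin n, (deepSet A r).card ≤ n := by
    rw [← Finset.card_biUnion hdisj]
    calc (Finset.univ.biUnion (deepSet A)).card ≤ (Finset.univ : Finset (Fin n)).card :=
      Finset.card_le_card (Finset.subset_univ _)
      _ = n := by simp
  calc onesCount A = ∑ r : Fin n, (rowSet A r).card := hsum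
    _ ≤ ∑ r : Fin n, ((deepSet A r).card + 3) := Finset.sum_le_sum fun r _ => card_row_le A r
    _ = (∑ r : Fin n, (deepSet A r).card) + 3 * n := by
        rw [Finset.sum_add_distrib]; simp [Finset.sum_const, mul_comm]
    _ ≤ n + 3 * n := by omega
    _ = 4 * n := by ring
end

section
/- Let s(n) = Σ_{k=0}^{⌊n/2⌋} C(n,2k)·k! for n ∈ ℕ. Then s(n) = n^{n/2 + o(n)}; that is, log s(n) / (n · log n) → 1/2 as n → ∞. -/
/-!
With `m = ⌊n/2⌋`, the largest term gives `m! ≤ s(n) ≤ 4ⁿ m!`, and `n! = C(n,m) m! (n-m)!` gives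
`m!² ≤ n! ≤ 4ⁿ m!²`. Hence `s(n)² = n! e^{O(n)} = nⁿ e^{O(n)}`, and `O(n)` is negligible
against `n log n`.
-/

/-- `s(n) = Σ_{k=0}^{⌊n/2⌋} C(n,2k)·k!`. -/
def sSpeed (n : ℕ) : ℕ := ∑ k ∈ Finset.range (n / 2 + 1), n.choose (2 * k) * k.factorial

open Real Filter Asymptotics
open scoped Nat

lemma abs_log_factorial_sub_self_mul_log_le (n : ℕ) : |log (n ! : ℝ) - n * log n| ≤ n := by
  have hfac : (0 : ℝ) < n ! := by exact_mod_cast n.factorial_pos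
  rw [abs_le]
  constructor
  · have h := pow_div_factorial_le_exp (n : ℝ) n.cast_nonneg n
    rw [div_le_iff₀ hfac] at h
    rcases n.eq_zero_or_pos with rfl | hn
    · simp
    have := log_le_log (by positivity) h
    rw [log_pow, log_mul (exp_pos _).ne' hfac.ne', log_exp] at this
    linarith
  · have := log_le_log hfac (by exact_mod_cast Nat.factorial_le_pow n : (n ! : ℝ) ≤ (n : ℝ) ^ n)
    rw [log_pow] at this
    linarith [Nat.cast_nonneg (α := ℝ) n]

lemma factorial_half_le_sSpeed (n : ℕ) : (n / 2)! ≤ sSpeed n :=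
  calc (n / 2)! ≤ n.choose (2 * (n / 2)) * (n / 2)! :=
        Nat.le_mul_of_pos_left _ (Nat.choose_pos (Nat.mul_div_le n 2))
    _ ≤ sSpeed n := Finset.single_le_sum (f := fun k => n.choose (2 * k) * k !)
        (fun _ _ => Nat.zero_le _) (Finset.self_mem_range_succ _)

lemma sSpeed_le (n : ℕ) : sSpeed n ≤ 4 ^ n * (n / 2)! :=
  calc sSpeed n ≤ ∑ _k ∈ Finset.range (n / 2 + 1), 2 ^ n * (n / 2)! :=
        Finset.sum_le_sum fun k hk => Nat.mul_le_mul (Nat.choose_le_two_pow n _)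
          (Nat.factorial_le (Nat.lt_succ_iff.mp (Finset.mem_range.mp hk)))
    _ = (n / 2 + 1) * (2 ^ n * (n / 2)!) := by simp
    _ ≤ 2 ^ n * (2 ^ n * (n / 2)!) :=
        Nat.mul_le_mul_right _ ((Nat.succ_le_succ (Nat.div_le_self n 2)).trans Nat.lt_two_pow_self)
    _ = 4 ^ n * (n / 2)! := by rw [← mul_assoc, ← mul_pow]; norm_num

lemma factorial_half_sq_le_factorial (n : ℕ) : (n / 2)! ^ 2 ≤ n ! := by
  rw [← Nat.choose_mul_factorial_mul_factorial (Nat.div_le_self n 2), sq, mul_assoc]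
  exact Nat.le_mul_of_pos_left _ (Nat.choose_pos (Nat.div_le_self n 2))
    |>.trans' (Nat.mul_le_mul_left _ (Nat.factorial_le (by omega)))

lemma factorial_le_factorial_half_sq (n : ℕ) : n ! ≤ 4 ^ n * (n / 2)! ^ 2 := by
  set m := n / 2
  have hchoose : n.choose m ≤ 2 ^ n := Nat.choose_le_two_pow n m
  have hfac : (n - m)! ≤ 2 ^ n * m ! :=
    calc (n - m)! ≤ (m + 1)! := Nat.factorial_le (by omega)
      _ = (m + 1) * m ! := Nat.factorial_succ m
      _ ≤ 2 ^ n * m ! := Nat.mul_le_mul_right _ ((show m + 1 ≤ n + 1 by omega).trans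
          Nat.lt_two_pow_self)
  calc n ! = n.choose m * m ! * (n - m)! :=
        (Nat.choose_mul_factorial_mul_factorial (Nat.div_le_self n 2)).symm
    _ ≤ 2 ^ n * m ! * (2 ^ n * m !) := by gcongr
    _ = 4 ^ n * m ! ^ 2 := by rw [show 4 = 2 ^ 2 by rfl, ← pow_mul, mul_comm 2 n, pow_mul]; ring

lemma abs_two_mul_log_sub_log_le {a b c D : ℝ} (hc : 0 < c) (hca : c ≤ a) (haD : a ≤ D * c)
    (hcb : c ^ 2 ≤ b) (hbD : b ≤ D * c ^ 2) : |2 * log a - log b| ≤ 2 * log D := by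
  have hD : 0 < D := pos_of_mul_pos_left (hc.trans_le (hca.trans haD)) hc.le
  have hDc : log a ≤ log D + log c := by
    rw [← log_mul hD.ne' hc.ne']; exact log_le_log (hc.trans_le hca) haD
  have hlog_sq : log (c ^ 2) = 2 * log c := by rw [log_pow, Nat.cast_ofNat]
  have hDc2 : log b ≤ log D + 2 * log c := by
    rw [← hlog_sq, ← log_mul hD.ne' (by positivity)]
    exact log_le_log ((pow_pos hc 2).trans_le hcb) hbD
  have hca' := log_le_log hc hca
  have hcb' : 2 * log c ≤ log b := by rw [← hlog_sq]; exact log_le_log (by positivity) hcb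
  have hD1 : 0 ≤ log D := log_nonneg (le_of_mul_le_mul_right (by linarith) hc)
  rw [abs_le]
  constructor <;> linarith

lemma abs_two_mul_log_sSpeed_sub_log_factorial_le (n : ℕ) :
    |2 * log (sSpeed n) - log (n ! : ℝ)| ≤ 2 * (n * log 4) := by
  have key := abs_two_mul_log_sub_log_le (a := sSpeed n) (b := n !) (D := 4 ^ n)
    (c := (n / 2)!) (by exact_mod_cast (n / 2).factorial_pos)
    (by exact_mod_cast factorial_half_le_sSpeed n) (by exact_mod_cast sSpeed_le n)
    (by exact_mod_cast factorial_half_sq_le_factorial n)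
    (by exact_mod_cast factorial_le_factorial_half_sq n)
  rwa [log_pow] at key

lemma isBigO_two_mul_log_sSpeed_sub :
    (fun n : ℕ => 2 * log (sSpeed n) - n * log n) =O[atTop] fun n => (n : ℝ) := by
  refine IsBigO.of_bound (2 * log 4 + 1) (Eventually.of_forall fun n => ?_)
  rw [Real.norm_eq_abs, Real.norm_natCast]
  calc |2 * log (sSpeed n) - n * log n|
      ≤ |2 * log (sSpeed n) - log (n ! : ℝ)| + |log (n ! : ℝ) - n * log n| := abs_sub_le _ _ _
    _ ≤ 2 * (n * log 4) + n := add_le_add (abs_two_mul_log_sSpeed_sub_log_factorial_le n)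
        (abs_log_factorial_sub_self_mul_log_le n)
    _ = (2 * log 4 + 1) * n := by ring

lemma natCast_isLittleO_mul_log :
    (fun n : ℕ => (n : ℝ)) =o[atTop] fun n => n * log n := by
  have hlog : (fun _ : ℕ => (1 : ℝ)) =o[atTop] fun n => log n :=
    isLittleO_const_log_atTop.comp_tendsto tendsto_natCast_atTop_atTop
  simpa using (isBigO_refl (fun n : ℕ => (n : ℝ)) atTop).mul_isLittleO hlog

/-- `s(n) = n^{n/2 + o(n)}`, i.e. `log s(n) / (n log n) → 1/2`. -/
theorem stmt17 :
    Filter.Tendsto (fun n : ℕ => Real.log (sSpeed n) / ((n : ℝ) * Real.log n))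
      Filter.atTop (nhds (1 / 2)) := by
  have hratio := (isBigO_two_mul_log_sSpeed_sub.trans_isLittleO
    natCast_isLittleO_mul_log).tendsto_div_nhds_zero
  have hlim := (hratio.div_const 2).const_add (1 / 2)
  rw [zero_div, add_zero] at hlim
  refine hlim.congr' ?_
  filter_upwards [eventually_gt_atTop 1] with n hn
  have hx : (n : ℝ) * log n ≠ 0 :=
    mul_ne_zero (by positivity) (log_pos (by exact_mod_cast hn)).ne'
  generalize (n : ℝ) * log n = x at hx ⊢
  field_simp
  ring
end

section
/- Let k, n ∈ ℕ and let π be a permutation of [k]. Then the number of ordered graphs G on [n] with maximum degree at most 1 and with φ(G) = π is at most C(n,2k)·Cat(k), where Cat(k) = C(2k,k)/(k+1) is the k-th Catalan number. -/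
/-- The ordered graph `G` on `[n]` has maximum degree at most 1. -/
def MaxDegLeOne {n : ℕ} (G : SimpleGraph (Fin n)) : Prop :=
  ∀ v : Fin n, (G.neighborSet v).ncard ≤ 1

/-- `φ(G) = π`, for an ordered graph `G` on `[n]` of maximum degree at most 1 with `k` edges:
writing the edges as `e_i = {a_i, b_i}` with `a_i < b_i` and `a_1 < … < a_k`, and letting `σ`
be the permutation with `b_{σ(1)} < … < b_{σ(k)}`, we have `φ(G) = σ⁻¹`; equivalently
`b ∘ π⁻¹` is strictly increasing. -/
def PhiEq {n k : ℕ} (G : SimpleGraph (Fin n)) (π : Equiv.Perm (Fin k)) : Prop :=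
  ∃ a b : Fin k → Fin n, StrictMono a ∧ (∀ i, a i < b i) ∧
    StrictMono (b ∘ ⇑π.symm) ∧
    ∀ u v : Fin n, G.Adj u v ↔ ∃ i : Fin k, (u = a i ∧ v = b i) ∨ (u = b i ∧ v = a i)

/-!
A graph counted here is a matching whose arcs `a i < b i` are listed so that `a` and `b ∘ π⁻¹`
are increasing; hence, given `π`, it is determined by its set `A` of left endpoints and its set
`B` of right endpoints, which are disjoint because the maximum degree is at most 1. Encode it by
the support `S = A ∪ B`, a `2k`-subset of `[n]`, together with the word that reads `S` in
increasing order and writes `U` at the points of `A` and `D` at those of `B`. A prefix of this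
word that contains a right endpoint `b i` also contains `a i`, so the word is a Dyck word of
semilength `k`; and `(S, word)` recovers `A` and `B`. The graphs thus inject into pairs of a
`2k`-subset of `[n]` and a Dyck word of semilength `k`.
-/

open Finset DyckStep Function

variable {α : Type*}

lemma List.Pairwise.mem_take_of_lt [Preorder α] {l : List α} (hl : l.Pairwise (· < ·)) {i : ℕ}
    {x y : α} (hx : x ∈ l) (hy : y ∈ l.take i) (hxy : x < y) : x ∈ l.take i := by
  rw [← List.take_append_drop i l, List.pairwise_append] at hl
  rw [← List.take_append_drop i l, List.mem_append] at hx
  exact hx.resolve_right fun hx' => (hl.2.2 y hy x hx').not_gt hxy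

section DecidableEq

variable [DecidableEq α]

def stepOf (A : Finset α) (v : α) : DyckStep := if v ∈ A then U else D

lemma count_U_map_stepOf (A : Finset α) {l : List α} (hl : l.Nodup) :
    (l.map (stepOf A)).count U = #{v ∈ l.toFinset | v ∈ A} := by
  rw [List.count_eq_countP, List.countP_map, List.countP_eq_length_filter,
    ← List.toFinset_card_of_nodup (hl.filter _), List.toFinset_filter]
  congr 2
  ext v
  by_cases h : v ∈ A <;> simp [stepOf, h]

lemma count_D_map_stepOf (A : Finset α) {l : List α} (hl : l.Nodup) :
    (l.map (stepOf A)).count D = #{v ∈ l.toFinset | v ∉ A} := by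
  rw [List.count_eq_countP, List.countP_map, List.countP_eq_length_filter,
    ← List.toFinset_card_of_nodup (hl.filter _), List.toFinset_filter]
  congr 2
  ext v
  by_cases h : v ∈ A <;> simp [stepOf, h]

lemma card_image_union_image {ι : Type*} [Fintype ι] {a b : ι → α} (ha : Injective a)
    (hb : Injective b) (hdisj : Disjoint (univ.image a) (univ.image b)) :
    #(univ.image a ∪ univ.image b) = 2 * Fintype.card ι := by
  rw [card_union_of_disjoint hdisj, card_image_of_injective _ ha, card_image_of_injective _ hb,
    card_univ, two_mul]

/-- Ballot inequality: each point of `T` outside `range a` is a right end `b i`, whose partner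
`a i` lies in `T ∩ range a`, and `a` is injective. -/
lemma card_filter_notMem_image_le {ι : Type*} [Fintype ι] {a b : ι → α}
    (ha : Injective a) {T : Finset α} (hT : T ⊆ univ.image a ∪ univ.image b)
    (hba : ∀ i, b i ∈ T → a i ∈ T) :
    #{v ∈ T | v ∉ univ.image a} ≤ #{v ∈ T | v ∈ univ.image a} :=
  calc #{v ∈ T | v ∉ univ.image a}
      ≤ #((univ.filter fun i => b i ∈ T).image b) := by
        refine card_le_card fun v hv => ?_
        obtain ⟨hvT, hva⟩ := mem_filter.1 hv
        obtain ⟨i, -, rfl⟩ := mem_image.1 ((mem_union.1 (hT hvT)).resolve_left hva)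
        exact mem_image_of_mem b (mem_filter.2 ⟨mem_univ i, hvT⟩)
    _ ≤ #(univ.filter fun i => b i ∈ T) := card_image_le
    _ ≤ #(univ.filter fun i => a i ∈ T) :=
        card_le_card (monotone_filter_right _ fun i _ => hba i)
    _ ≤ #{v ∈ T | v ∈ univ.image a} :=
        card_le_card_of_injOn a (fun i hi => by simp_all) ha.injOn

end DecidableEq

section LinearOrder

variable [LinearOrder α]

def stepWord (A S : Finset α) : List DyckStep := S.sort.map (stepOf A)

lemma count_U_stepWord {A S : Finset α} (hAS : A ⊆ S) : (stepWord A S).count U = #A := by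
  rw [stepWord, count_U_map_stepOf A (sort_nodup S _), sort_toFinset, filter_mem_eq_inter,
    inter_eq_right.2 hAS]

lemma count_D_stepWord (A S : Finset α) : (stepWord A S).count D = #(S \ A) := by
  rw [stepWord, count_D_map_stepOf A (sort_nodup S _), sort_toFinset, sdiff_eq_filter]

lemma eq_of_stepWord_eq {A A' S : Finset α} (hA : A ⊆ S) (hA' : A' ⊆ S)
    (h : stepWord A S = stepWord A' S) : A = A' := by
  have hstep : ∀ v ∈ S, stepOf A v = stepOf A' v := by
    simpa using List.map_inj_left.1 h
  ext v
  constructor <;> intro hv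
  · simpa [stepOf, hv] using hstep v (hA hv)
  · simpa [stepOf, hv] using hstep v (hA' hv)

variable {ι : Type*} [Fintype ι] {a b : ι → α}

lemma count_D_le_count_U_take_stepWord (ha : Injective a) (hab : ∀ i, a i < b i) (i : ℕ) :
    ((stepWord (univ.image a) (univ.image a ∪ univ.image b)).take i).count D ≤
      ((stepWord (univ.image a) (univ.image a ∪ univ.image b)).take i).count U := by
  have hnd := ((sort_nodup _ _).sublist (List.take_sublist i _) :
    ((univ.image a ∪ univ.image b).sort.take i).Nodup)
  rw [stepWord, ← List.map_take, count_D_map_stepOf _ hnd, count_U_map_stepOf _ hnd]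
  refine card_filter_notMem_image_le (b := b) ha (fun v hv => ?_) fun j hj => ?_
  · simpa using List.mem_of_mem_take (List.mem_toFinset.1 hv)
  · rw [List.mem_toFinset] at hj ⊢
    exact (sortedLT_sort _).pairwise.mem_take_of_lt (by simp) hj (hab j)

def DyckWord.ofArcs (a b : ι → α) (ha : Injective a) (hb : Injective b) (hab : ∀ i, a i < b i)
    (hdisj : Disjoint (univ.image a) (univ.image b)) : DyckWord where
  toList := stepWord (univ.image a) (univ.image a ∪ univ.image b)
  count_U_eq_count_D := by
    rw [count_U_stepWord subset_union_left, count_D_stepWord, union_sdiff_cancel_left hdisj,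
      card_image_of_injective _ ha, card_image_of_injective _ hb]
  count_D_le_count_U := count_D_le_count_U_take_stepWord ha hab

@[simp]
lemma DyckWord.toList_ofArcs (ha : Injective a) (hb : Injective b) (hab : ∀ i, a i < b i)
    (hdisj : Disjoint (univ.image a) (univ.image b)) :
    (DyckWord.ofArcs a b ha hb hab hdisj).toList =
      stepWord (univ.image a) (univ.image a ∪ univ.image b) :=
  rfl

lemma DyckWord.semilength_ofArcs (ha : Injective a) (hb : Injective b) (hab : ∀ i, a i < b i)
    (hdisj : Disjoint (univ.image a) (univ.image b)) :
    (DyckWord.ofArcs a b ha hb hab hdisj).semilength = Fintype.card ι := by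
  rw [DyckWord.semilength, DyckWord.toList_ofArcs, count_U_stepWord subset_union_left,
    card_image_of_injective _ ha, card_univ]

end LinearOrder

section PhiWitness

variable {n k : ℕ}

structure IsPhiWitness (G : SimpleGraph (Fin n)) (π : Equiv.Perm (Fin k)) (a b : Fin k → Fin n) :
    Prop where
  strictMono_left : StrictMono a
  left_lt_right : ∀ i, a i < b i
  strictMono_right : StrictMono (b ∘ π.symm)
  adj_iff : ∀ u v, G.Adj u v ↔ ∃ i, (u = a i ∧ v = b i) ∨ (u = b i ∧ v = a i)

lemma phiEq_iff {G : SimpleGraph (Fin n)} {π : Equiv.Perm (Fin k)} :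
    PhiEq G π ↔ ∃ a b, IsPhiWitness G π a b :=
  ⟨fun ⟨a, b, h₁, h₂, h₃, h₄⟩ => ⟨a, b, h₁, h₂, h₃, h₄⟩,
    fun ⟨a, b, h₁, h₂, h₃, h₄⟩ => ⟨a, b, h₁, h₂, h₃, h₄⟩⟩

namespace IsPhiWitness

variable {G G' : SimpleGraph (Fin n)} {π : Equiv.Perm (Fin k)} {a b a' b' : Fin k → Fin n}

lemma injective_right (hw : IsPhiWitness G π a b) : Injective b := by
  simpa [comp_assoc] using hw.strictMono_right.injective.comp π.injective

lemma disjoint (hw : IsPhiWitness G π a b) (hG : MaxDegLeOne G) :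
    Disjoint (univ.image a) (univ.image b) := by
  refine disjoint_left.2 fun v hva hvb => ?_
  obtain ⟨i, -, rfl⟩ := mem_image.1 hva
  obtain ⟨j, -, hj⟩ := mem_image.1 hvb
  have hne : b i ≠ a j := (hw.left_lt_right j |>.trans_eq hj |>.trans (hw.left_lt_right i)).ne'
  have hsub : ({b i, a j} : Set (Fin n)) ⊆ G.neighborSet (a i) := by
    rintro x (rfl | rfl)
    · exact (hw.adj_iff _ _).2 ⟨i, .inl ⟨rfl, rfl⟩⟩
    · exact (hw.adj_iff _ _).2 ⟨j, .inr ⟨hj.symm, rfl⟩⟩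
  have := (Set.ncard_pair hne).symm.trans_le ((Set.ncard_le_ncard hsub).trans (hG (a i)))
  omega

lemma eq_of_image_eq (hw : IsPhiWitness G π a b) (hw' : IsPhiWitness G' π a' b')
    (hA : univ.image a = univ.image a') (hB : univ.image b = univ.image b') : G = G' := by
  have ha : a = a' := (hw.strictMono_left.range_inj hw'.strictMono_left).1 <| by
    simpa using congrArg ((↑) : Finset (Fin n) → Set (Fin n)) hA
  have hb : b ∘ π.symm = b' ∘ π.symm :=
    (hw.strictMono_right.range_inj hw'.strictMono_right).1 <| by
      simpa [Set.range_comp] using congrArg ((↑) : Finset (Fin n) → Set (Fin n)) hB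
  have hb : b = b' := π.symm.surjective.injective_comp_right hb
  ext u v
  rw [hw.adj_iff, hw'.adj_iff, ha, hb]

end IsPhiWitness

end PhiWitness

lemma exists_injective_encoding {n k : ℕ} (π : Equiv.Perm (Fin k)) :
    ∃ f : {G : SimpleGraph (Fin n) | MaxDegLeOne G ∧ PhiEq G π} →
      {S : Finset (Fin n) // #S = 2 * k} × {p : DyckWord // p.semilength = k}, Injective f := by
  choose a b hw using fun G : {G : SimpleGraph (Fin n) | MaxDegLeOne G ∧ PhiEq G π} =>
    phiEq_iff.1 G.2.2
  have hdisj G := (hw G).disjoint G.2.1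
  have ha G := (hw G).strictMono_left.injective
  have hb G := (hw G).injective_right
  refine ⟨fun G =>
    (⟨univ.image (a G) ∪ univ.image (b G), by
        rw [card_image_union_image (ha G) (hb G) (hdisj G), Fintype.card_fin]⟩,
      ⟨DyckWord.ofArcs (a G) (b G) (ha G) (hb G) (hw G).left_lt_right (hdisj G),
        by rw [DyckWord.semilength_ofArcs, Fintype.card_fin]⟩), fun G G' h => ?_⟩
  simp only [Prod.mk.injEq, Subtype.mk.injEq] at h
  obtain ⟨hS, hp⟩ := h
  have hword : stepWord (univ.image (a G)) (univ.image (a G') ∪ univ.image (b G')) =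
      stepWord (univ.image (a G')) (univ.image (a G') ∪ univ.image (b G')) := by
    simpa only [DyckWord.toList_ofArcs, hS] using congrArg DyckWord.toList hp
  have hA : univ.image (a G) = univ.image (a G') :=
    eq_of_stepWord_eq (hS ▸ subset_union_left) subset_union_left hword
  have hB : univ.image (b G) = univ.image (b G') := by
    rw [← union_sdiff_cancel_left (hdisj G), hS, hA, union_sdiff_cancel_left (hdisj G')]
  exact Subtype.ext ((hw G).eq_of_image_eq (hw G') hA hB)

theorem stmt18 (k n : ℕ) (π : Equiv.Perm (Fin k)) :
    ({G : SimpleGraph (Fin n) | MaxDegLeOne G ∧ PhiEq G π}).ncard ≤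
      n.choose (2 * k) * ((2 * k).choose k / (k + 1)) := by
  obtain ⟨f, hf⟩ := exists_injective_encoding (n := n) π
  have h := Nat.card_le_card_of_injective f hf
  rwa [Nat.card_coe_set_eq, Nat.card_eq_fintype_card, Fintype.card_prod, Fintype.card_finset_len,
    Fintype.card_fin, DyckWord.card_dyckWord_semilength_eq_catalan, catalan_eq_centralBinom_div,
    Nat.centralBinom_eq_two_mul_choose] at h
end

section
/- Let P_n be the set of all co-matchings on [n] and let P = (P_n)_{n≥1} be the corresponding property of ordered graphs. Then: (a) P is hereditary; (b) for every constant c > 0 there exists n ∈ ℕ with |P_n| > c^n; and (c) for every k ≥ 2 and every permutation π of [k], the ordered graph H(π) is not a co-matching, so H(π) ∉ P_{2k}. -/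
/-- The ordered graph `H(π)` on `[2k]` whose edges are the pairs `{i, π(i)+k}` for `i ∈ [k]`. -/
def HpermGraph (k : ℕ) (π : Equiv.Perm (Fin k)) : SimpleGraph (Fin (2 * k)) :=
  SimpleGraph.fromEdgeSet {e | ∃ i : Fin k, e = s(finL k i, finR k (π i))}

/-- The ordered graph on `[|U|]` obtained from the induced subgraph of `G` on `U ⊆ [n]`
via the unique order isomorphism `[|U|] → U`. -/
def inducedOG {n : ℕ} (G : SimpleGraph (Fin n)) (U : Finset (Fin n)) :
    SimpleGraph (Fin U.card) :=
  SimpleGraph.comap (fun i : Fin U.card => U.orderEmbOfFin rfl i) G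

/-- `G` is a co-matching: any two pairs of vertices that are not edges of `G` intersect
in 0 or 2 vertices (equivalently, the complement of `G` is a matching). -/
def CoMatching {n : ℕ} (G : SimpleGraph (Fin n)) : Prop :=
  ∀ x₁ y₁ x₂ y₂ : Fin n, x₁ ≠ y₁ → x₂ ≠ y₂ → ¬G.Adj x₁ y₁ → ¬G.Adj x₂ y₂ →
    (({x₁, y₁} : Finset (Fin n)) ∩ {x₂, y₂}).card = 0 ∨
    (({x₁, y₁} : Finset (Fin n)) ∩ {x₂, y₂}).card = 2

lemma finL_ne_finR {k : ℕ} (i j : Fin k) : finL k i ≠ finR k j := by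
  have := i.isLt
  simp only [finL, finR, ne_eq, Fin.mk.injEq]
  omega

lemma finL_inj {k : ℕ} {i j : Fin k} (h : finL k i = finL k j) : i = j := by
  have := congrArg Fin.val h
  simp only [finL] at this
  exact Fin.ext this

lemma finR_inj {k : ℕ} {i j : Fin k} (h : finR k i = finR k j) : i = j := by
  have := congrArg Fin.val h
  simp only [finR] at this
  exact Fin.ext (by omega)

lemma Hadj_iff {k : ℕ} (π : Equiv.Perm (Fin k)) (i j : Fin k) :
    (HpermGraph k π).Adj (finL k i) (finR k j) ↔ j = π i := by
  simp only [HpermGraph, SimpleGraph.fromEdgeSet_adj, Set.mem_setOf_eq]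
  constructor
  · rintro ⟨⟨i', h⟩, -⟩
    rcases Sym2.eq_iff.1 h with ⟨h1, h2⟩ | ⟨h1, h2⟩
    · obtain rfl := finL_inj h1
      exact finR_inj h2
    · exact absurd h1 (finL_ne_finR _ _)
  · rintro rfl
    exact ⟨⟨i, rfl⟩, finL_ne_finR _ _⟩

lemma not_Hadj_LL {k : ℕ} (π : Equiv.Perm (Fin k)) (i j : Fin k) :
    ¬ (HpermGraph k π).Adj (finL k i) (finL k j) := by
  rintro ⟨⟨i', h⟩, -⟩
  rcases Sym2.eq_iff.1 h with ⟨h1, h2⟩ | ⟨h1, h2⟩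
  · exact finL_ne_finR _ _ h2
  · exact finL_ne_finR _ _ h1

/-- The complement of `H(σ)` is a co-matching. -/
lemma coMatching_compl {m : ℕ} (σ : Equiv.Perm (Fin m)) :
    CoMatching (HpermGraph m σ)ᶜ := by
  intro x₁ y₁ x₂ y₂ h1 h2 e1 e2
  have a1 : (HpermGraph m σ).Adj x₁ y₁ := by
    by_contra h; exact e1 ((SimpleGraph.compl_adj _ _ _).2 ⟨h1, h⟩)
  have a2 : (HpermGraph m σ).Adj x₂ y₂ := by
    by_contra h; exact e2 ((SimpleGraph.compl_adj _ _ _).2 ⟨h2, h⟩)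
  obtain ⟨⟨i, hi⟩, -⟩ := a1
  obtain ⟨⟨j, hj⟩, -⟩ := a2
  have p1 : ({x₁, y₁} : Finset (Fin (2 * m))) = {finL m i, finR m (σ i)} := by
    rcases Sym2.eq_iff.1 hi with ⟨h, h'⟩ | ⟨h, h'⟩ <;> subst h <;> subst h'
    · rfl
    · exact Finset.pair_comm _ _
  have p2 : ({x₂, y₂} : Finset (Fin (2 * m))) = {finL m j, finR m (σ j)} := by
    rcases Sym2.eq_iff.1 hj with ⟨h, h'⟩ | ⟨h, h'⟩ <;> subst h <;> subst h'
    · rfl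
    · exact Finset.pair_comm _ _
  by_cases hij : i = j
  · right
    subst hij
    rw [p1, p2, Finset.inter_self, Finset.card_pair (finL_ne_finR _ _)]
  · left
    rw [p1, p2, Finset.card_eq_zero]
    apply Finset.eq_empty_of_forall_notMem
    intro a ha
    simp only [Finset.mem_inter, Finset.mem_insert, Finset.mem_singleton] at ha
    obtain ⟨h | h, h' | h'⟩ := ha <;> subst h
    · exact hij (finL_inj h')
    · exact finL_ne_finR i (σ j) h'
    · exact finL_ne_finR j (σ i) h'.symm
    · exact hij (σ.injective (finR_inj h'))

lemma HpermGraph_inj {m : ℕ} {σ τ : Equiv.Perm (Fin m)}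
    (h : HpermGraph m σ = HpermGraph m τ) : σ = τ := by
  apply Equiv.ext
  intro i
  have hadj : (HpermGraph m σ).Adj (finL m i) (finR m (σ i)) := (Hadj_iff σ i (σ i)).2 rfl
  rw [h] at hadj
  exact (Hadj_iff τ i (σ i)).1 hadj

lemma factorial_le_ncard (m : ℕ) :
    Nat.factorial m ≤ ({G : SimpleGraph (Fin (2 * m)) | CoMatching G}).ncard := by
  set F : Equiv.Perm (Fin m) → SimpleGraph (Fin (2 * m)) := fun σ => (HpermGraph m σ)ᶜ with hF
  have hFinj : Function.Injective F := by
    intro σ τ h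
    apply HpermGraph_inj
    have h2 := congrArg (·ᶜ) h
    simpa [hF] using h2
  have hsub : Set.range F ⊆ {G : SimpleGraph (Fin (2 * m)) | CoMatching G} := by
    rintro _ ⟨σ, rfl⟩
    exact coMatching_compl σ
  have h2 : (Set.range F).ncard = Nat.factorial m := by
    rw [← Nat.card_coe_set_eq, Nat.card_range_of_injective hFinj,
      Nat.card_eq_fintype_card, Fintype.card_perm, Fintype.card_fin]
  calc Nat.factorial m = (Set.range F).ncard := h2.symm
    _ ≤ _ := Set.ncard_le_ncard hsub (Set.toFinite _)

theorem stmt19 :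
    -- (a) the property of co-matchings is hereditary
    (∀ n : ℕ, ∀ G ∈ {G : SimpleGraph (Fin n) | CoMatching G}, ∀ U : Finset (Fin n),
      inducedOG G U ∈ {G : SimpleGraph (Fin U.card) | CoMatching G}) ∧
    -- (b) its speed is super-exponential
    (∀ c : ℝ, 0 < c → ∃ n : ℕ,
      c ^ n < (({G : SimpleGraph (Fin n) | CoMatching G}).ncard : ℝ)) ∧
    -- (c) for `k ≥ 2`, no `H(π)` is a co-matching
    (∀ k : ℕ, 2 ≤ k → ∀ π : Equiv.Perm (Fin k),
      HpermGraph k π ∉ {G : SimpleGraph (Fin (2 * k)) | CoMatching G}) := by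
  refine ⟨?_, ?_, ?_⟩
  · -- (a)
    intro n G hG U x₁ y₁ x₂ y₂ h1 h2 e1 e2
    set f : Fin U.card → Fin n := fun i => U.orderEmbOfFin rfl i with hf
    have hfinj : Function.Injective f := (U.orderEmbOfFin rfl).injective
    have key : ∀ a b a' b' : Fin U.card,
        ({f a, f b} : Finset (Fin n)) ∩ {f a', f b'} =
          ((({a, b} : Finset (Fin U.card)) ∩ {a', b'}).image f) := by
      intro a b a' b'
      rw [Finset.image_inter _ _ hfinj]
      simp [Finset.image_insert, Finset.image_singleton]
    have := hG (f x₁) (f y₁) (f x₂) (f y₂) (fun h => h1 (hfinj h)) (fun h => h2 (hfinj h))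
      e1 e2
    rwa [key, Finset.card_image_of_injective _ hfinj] at this
  · -- (b)
    intro c hc
    set d : ℝ := max c 1 with hd
    have hd1 : (1 : ℝ) ≤ d := le_max_right _ _
    have hcd : c ≤ d := le_max_left _ _
    set K : ℕ := ⌈d ^ 4⌉₊ + 1 with hK
    refine ⟨2 * (2 * K), ?_⟩
    have hKd : (d : ℝ) ^ 4 < K := by
      calc (d : ℝ) ^ 4 ≤ (⌈d ^ 4⌉₊ : ℝ) := Nat.le_ceil _
        _ < K := by exact_mod_cast Nat.lt_succ_self _
    have step1 : c ^ (2 * (2 * K)) ≤ d ^ (2 * (2 * K)) := pow_le_pow_left₀ hc.le hcd _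
    have step2 : d ^ (2 * (2 * K)) = (d ^ 4) ^ K := by
      rw [← pow_mul]
      ring_nf
    have step3 : ((d : ℝ) ^ 4) ^ K < ((K : ℝ)) ^ K := by
      apply pow_lt_pow_left₀ hKd (by positivity)
      omega
    have step4 : ((K : ℝ)) ^ K ≤ ((Nat.factorial (2 * K) : ℕ) : ℝ) := by
      have hnat : K ^ K ≤ Nat.factorial (2 * K) := by
        calc K ^ K ≤ (K + 1) ^ K := Nat.pow_le_pow_left (Nat.le_succ _) _
          _ ≤ Nat.factorial K * (K + 1) ^ K := Nat.le_mul_of_pos_left _ K.factorial_pos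
          _ ≤ Nat.factorial (K + K) := Nat.factorial_mul_pow_le_factorial
          _ = Nat.factorial (2 * K) := by rw [two_mul]
      exact_mod_cast hnat
    have step5 : ((Nat.factorial (2 * K) : ℕ) : ℝ) ≤
        (({G : SimpleGraph (Fin (2 * (2 * K))) | CoMatching G}).ncard : ℝ) := by
      exact_mod_cast factorial_le_ncard (2 * K)
    calc c ^ (2 * (2 * K)) ≤ d ^ (2 * (2 * K)) := step1
      _ = (d ^ 4) ^ K := step2
      _ < (K : ℝ) ^ K := step3
      _ ≤ ((Nat.factorial (2 * K) : ℕ) : ℝ) := step4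
      _ ≤ _ := step5
  · -- (c)
    intro k hk π hmem
    simp only [Set.mem_setOf_eq] at hmem
    set i : Fin k := ⟨0, by omega⟩ with hi
    set j : Fin k := ⟨1, by omega⟩ with hj
    have hij : i ≠ j := by simp [hi, hj, Fin.ext_iff]
    have hne1 : finL k i ≠ finL k j := fun h => hij (finL_inj h)
    have hne2 : finL k i ≠ finR k (π j) := finL_ne_finR _ _
    have hna1 : ¬ (HpermGraph k π).Adj (finL k i) (finL k j) := not_Hadj_LL π i j
    have hna2 : ¬ (HpermGraph k π).Adj (finL k i) (finR k (π j)) := by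
      intro h
      exact hij (π.injective ((Hadj_iff π i (π j)).1 h)).symm
    rcases hmem (finL k i) (finL k j) (finL k i) (finR k (π j)) hne1 hne2 hna1 hna2 with h | h
    · have hmem1 : finL k i ∈
          (({finL k i, finL k j} : Finset (Fin (2 * k))) ∩ {finL k i, finR k (π j)}) := by
        simp
      rw [Finset.card_eq_zero.1 h] at hmem1
      simp at hmem1
    · have heq := Finset.eq_of_subset_of_card_le
        (Finset.inter_subset_left :
          (({finL k i, finL k j} : Finset (Fin (2 * k))) ∩ {finL k i, finR k (π j)}) ⊆ _)
        (by rw [h, Finset.card_pair hne1])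
      have hmem2 : finL k j ∈
          (({finL k i, finL k j} : Finset (Fin (2 * k))) ∩ {finL k i, finR k (π j)}) := by
        rw [heq]; simp
      have := (Finset.mem_inter.1 hmem2).2
      simp only [Finset.mem_insert, Finset.mem_singleton] at this
      rcases this with h' | h'
      · exact hne1 h'.symm
      · exact finL_ne_finR j (π j) h'
end
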